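/- arXiv:1712.02878 — 4 statements merged into one kernel-verified Lean document; each statement's English description precedes it below -/
import Mathlib

section
/- For permutations x, y, z in S_n with the breakpoint distance, z is a geodesic point of x and y (i.e., d(x,y) = d(x,z) + d(z,y)) if and only if A_{x,y} ⊆ A_z ⊆ A_x ∪ A_y. -/
open Finset

/-- The set of adjacencies of a permutation of `{1,...,n}`: unordered pairs of
consecutive entries. -/
def bpAdj {n : ℕ} (x : Equiv.Perm (Fin n)) : Finset (Sym2 (Fin n)) :=
  Finset.image (fun i : Fin (n - 1) =>
    s(x ⟨i.val, by have := i.isLt; omega⟩, x ⟨i.val + 1, by have := i.isLt; omega⟩))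
    Finset.univ

/-- The breakpoint distance `d(x,y) = (n-1) - |A_x ∩ A_y|`. -/
def bpDist {n : ℕ} (x y : Equiv.Perm (Fin n)) : ℕ :=
  (n - 1) - (bpAdj x ∩ bpAdj y).card

/-- Total breakpoint distance of `z` to a finite set `X`. -/
def bpTotal {n : ℕ} (z : Equiv.Perm (Fin n)) (X : Finset (Equiv.Perm (Fin n))) : ℕ :=
  ∑ y ∈ X, bpDist z y

/-- `π` is a breakpoint median of `X`: it minimizes the total breakpoint distance to `X`. -/
def IsBpMedian {n : ℕ} (π : Equiv.Perm (Fin n)) (X : Finset (Equiv.Perm (Fin n))) : Prop :=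
  ∀ σ : Equiv.Perm (Fin n), bpTotal π X ≤ bpTotal σ X

lemma card_bpAdj {n : ℕ} (x : Equiv.Perm (Fin n)) : (bpAdj x).card = n - 1 := by
  rw [bpAdj, Finset.card_image_of_injective _ ?_, Finset.card_univ, Fintype.card_fin]
  intro i j h
  simp only [Sym2.eq_iff] at h
  rcases h with ⟨h1, h2⟩ | ⟨h1, h2⟩
  · exact Fin.ext (by simpa [Fin.ext_iff] using x.injective h1)
  · have e1 : i.val = j.val + 1 := by simpa [Fin.ext_iff] using x.injective h1
    have e2 : i.val + 1 = j.val := by simpa [Fin.ext_iff] using x.injective h2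
    omega

/-- z is a geodesic point of x and y iff A_{x,y} ⊆ A_z ⊆ A_x ∪ A_y. -/
theorem geodesic_iff (n : ℕ) (x y z : Equiv.Perm (Fin n)) :
    bpDist x y = bpDist x z + bpDist z y ↔
      (bpAdj x ∩ bpAdj y ⊆ bpAdj z ∧ bpAdj z ⊆ bpAdj x ∪ bpAdj y) := by
  have hz := card_bpAdj z
  have hxy : (bpAdj x ∩ bpAdj y).card ≤ n - 1 := by
    rw [← card_bpAdj x]; exact card_le_card inter_subset_left
  have hxz : (bpAdj x ∩ bpAdj z).card ≤ n - 1 := by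
    rw [← card_bpAdj x]; exact card_le_card inter_subset_left
  have hzy : (bpAdj z ∩ bpAdj y).card ≤ n - 1 := by
    rw [← hz]; exact card_le_card inter_subset_left
  have hsum : (bpAdj x ∩ bpAdj z).card + (bpAdj z ∩ bpAdj y).card =
      ((bpAdj x ∪ bpAdj y) ∩ bpAdj z).card + (bpAdj x ∩ bpAdj y ∩ bpAdj z).card := by
    have u1 : (bpAdj x ∩ bpAdj z) ∪ (bpAdj z ∩ bpAdj y) = (bpAdj x ∪ bpAdj y) ∩ bpAdj z := by
      ext a; simp only [mem_union, mem_inter]; tauto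
    have u2 : (bpAdj x ∩ bpAdj z) ∩ (bpAdj z ∩ bpAdj y) = bpAdj x ∩ bpAdj y ∩ bpAdj z := by
      ext a; simp only [mem_union, mem_inter]; tauto
    rw [← Finset.card_union_add_card_inter, u1, u2]
  have hu : ((bpAdj x ∪ bpAdj y) ∩ bpAdj z).card ≤ n - 1 := by
    rw [← hz]; exact card_le_card inter_subset_right
  have hi : (bpAdj x ∩ bpAdj y ∩ bpAdj z).card ≤ (bpAdj x ∩ bpAdj y).card :=
    card_le_card inter_subset_left
  simp only [bpDist]
  constructor
  · intro h
    have key : ((bpAdj x ∪ bpAdj y) ∩ bpAdj z).card = n - 1 ∧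
        (bpAdj x ∩ bpAdj y ∩ bpAdj z).card = (bpAdj x ∩ bpAdj y).card := by omega
    constructor
    · have := Finset.eq_of_subset_of_card_le (inter_subset_left
        (s₁ := bpAdj x ∩ bpAdj y) (s₂ := bpAdj z)) (le_of_eq key.2.symm)
      intro a ha
      have : a ∈ bpAdj x ∩ bpAdj y ∩ bpAdj z := by rw [this]; exact ha
      exact (mem_inter.1 this).2
    · have := Finset.eq_of_subset_of_card_le (inter_subset_right
        (s₁ := bpAdj x ∪ bpAdj y) (s₂ := bpAdj z)) (by omega)
      intro a ha
      have : a ∈ (bpAdj x ∪ bpAdj y) ∩ bpAdj z := by rw [this]; exact ha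
      exact (mem_inter.1 this).1
  · rintro ⟨h1, h2⟩
    have e1 : bpAdj x ∩ bpAdj y ∩ bpAdj z = bpAdj x ∩ bpAdj y :=
      inter_eq_left.2 h1
    have e2 : (bpAdj x ∪ bpAdj y) ∩ bpAdj z = bpAdj z := inter_eq_right.2 h2
    rw [e1, e2, hz] at hsum
    omega
end

section
/- Let ξ be a permutation chosen uniformly at random from S_n (n ≥ 4). Then the variance of the number of common adjacencies between ξ and the identity permutation equals (2(n-1)/n)(1 - 2(n-1)/n) + 4(n-2)(n-3)/(n(n-1)) + 4(n-2)/(n(n-1)). -/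
open Finset

/-! ### Auxiliary lemmas -/

theorem mySubtypeCongr_apply {α : Type*} {p q : α → Prop} [DecidablePred p] [DecidablePred q]
    (e : { x // p x } ≃ { x // q x }) (f : { x // ¬p x } ≃ { x // ¬q x }) (x : α) :
    Equiv.subtypeCongr e f x = if h : p x then (e ⟨x, h⟩ : α) else (f ⟨x, h⟩ : α) := by
  by_cases h : p x <;> simp [Equiv.subtypeCongr, h]

theorem card_perm_prescribed {α β : Type*} [Fintype α] [Fintype β] [DecidableEq α] [DecidableEq β]
    {g f : β → α} (hg : Function.Injective g) (hf : Function.Injective f) :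
    (Finset.univ.filter (fun ξ : Equiv.Perm α => ∀ b, ξ (g b) = f b)).card
      = (Fintype.card α - Fintype.card β).factorial := by
  classical
  have key : {ξ : Equiv.Perm α // ∀ b, ξ (g b) = f b}
      ≃ ({x : α // ¬ x ∈ Set.range g} ≃ {x : α // ¬ x ∈ Set.range f}) := by
    refine
      { toFun := fun ξ =>
          { toFun := fun x => ⟨ξ.1 x.1, ?_⟩
            invFun := fun y => ⟨ξ.1.symm y.1, ?_⟩
            left_inv := fun x => Subtype.ext (ξ.1.symm_apply_apply x.1)
            right_inv := fun y => Subtype.ext (ξ.1.apply_symm_apply y.1) }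
        invFun := fun e =>
          ⟨Equiv.subtypeCongr (((Equiv.ofInjective g hg).symm).trans (Equiv.ofInjective f hf)) e,
            fun b => ?_⟩
        left_inv := fun ξ => ?_
        right_inv := fun e => ?_ }
    · rintro ⟨b, hb⟩
      exact x.2 ⟨b, ξ.1.injective ((ξ.2 b).trans hb)⟩
    · rintro ⟨b, hb⟩
      exact y.2 ⟨b, by rw [← ξ.2 b, hb, Equiv.apply_symm_apply]⟩
    · rw [mySubtypeCongr_apply, dif_pos ⟨b, rfl⟩]
      simp
    · apply Subtype.ext
      apply Equiv.ext
      intro x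
      rw [mySubtypeCongr_apply]
      split_ifs with h
      · obtain ⟨b, rfl⟩ := h
        simp [ξ.2 b]
      · rfl
    · apply Equiv.ext
      rintro ⟨x, hx⟩
      apply Subtype.ext
      simp only [Equiv.coe_fn_mk]
      rw [mySubtypeCongr_apply, dif_neg hx]
  rw [← Fintype.card_subtype]
  rw [Fintype.card_congr key]
  have h1 : Fintype.card {x : α // ¬ x ∈ Set.range g} = Fintype.card α - Fintype.card β := by
    rw [Fintype.card_subtype_compl]
    congr 1
    exact (Set.card_range_of_injective hg)
  have h2 : Fintype.card {x : α // ¬ x ∈ Set.range f} = Fintype.card α - Fintype.card β := by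
    rw [Fintype.card_subtype_compl]
    congr 1
    exact (Set.card_range_of_injective hf)
  rw [Fintype.card_equiv (Fintype.equivOfCardEq (h1.trans h2.symm)), h1]

theorem count2 {n : ℕ} {p q a b : Fin n} (hpq : p ≠ q) (hab : a ≠ b) :
    (Finset.univ.filter (fun ξ : Equiv.Perm (Fin n) => ξ p = a ∧ ξ q = b)).card
      = (n - 2).factorial := by
  have hg : Function.Injective ![p, q] := by
    intro i j h; fin_cases i <;> fin_cases j <;> simp_all
  have hf : Function.Injective ![a, b] := by
    intro i j h; fin_cases i <;> fin_cases j <;> simp_all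
  have := card_perm_prescribed hg hf
  simp only [Fintype.card_fin] at this
  rw [← this]
  refine congrArg Finset.card ?_
  ext ξ
  simp only [Finset.mem_filter, Finset.mem_univ, true_and]
  constructor
  · rintro ⟨h1, h2⟩ t; fin_cases t <;> simpa
  · intro h; exact ⟨h 0, h 1⟩

theorem count3 {n : ℕ} {p q r a b c : Fin n} (hpq : p ≠ q) (hpr : p ≠ r) (hqr : q ≠ r)
    (hab : a ≠ b) (hac : a ≠ c) (hbc : b ≠ c) :
    (Finset.univ.filter (fun ξ : Equiv.Perm (Fin n) => ξ p = a ∧ ξ q = b ∧ ξ r = c)).card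
      = (n - 3).factorial := by
  have hg : Function.Injective ![p, q, r] := by
    intro i j h; fin_cases i <;> fin_cases j <;> simp_all
  have hf : Function.Injective ![a, b, c] := by
    intro i j h; fin_cases i <;> fin_cases j <;> simp_all
  have := card_perm_prescribed hg hf
  simp only [Fintype.card_fin] at this
  rw [← this]
  refine congrArg Finset.card ?_
  ext ξ
  simp only [Finset.mem_filter, Finset.mem_univ, true_and]
  constructor
  · rintro ⟨h1, h2, h3⟩ t; fin_cases t <;> simpa
  · intro h; exact ⟨h 0, h 1, h 2⟩

theorem count4 {n : ℕ} {p q r s a b c d : Fin n} (hpq : p ≠ q) (hpr : p ≠ r) (hps : p ≠ s)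
    (hqr : q ≠ r) (hqs : q ≠ s) (hrs : r ≠ s)
    (hab : a ≠ b) (hac : a ≠ c) (had : a ≠ d) (hbc : b ≠ c) (hbd : b ≠ d) (hcd : c ≠ d) :
    (Finset.univ.filter
        (fun ξ : Equiv.Perm (Fin n) => (ξ p = a ∧ ξ q = b) ∧ (ξ r = c ∧ ξ s = d))).card
      = (n - 4).factorial := by
  have hg : Function.Injective ![p, q, r, s] := by
    intro i j h; fin_cases i <;> fin_cases j <;> simp_all
  have hf : Function.Injective ![a, b, c, d] := by
    intro i j h; fin_cases i <;> fin_cases j <;> simp_all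
  have := card_perm_prescribed hg hf
  simp only [Fintype.card_fin] at this
  rw [← this]
  refine congrArg Finset.card ?_
  ext ξ
  simp only [Finset.mem_filter, Finset.mem_univ, true_and]
  constructor
  · rintro ⟨⟨h1, h2⟩, h3, h4⟩ t; fin_cases t <;> simpa
  · intro h; exact ⟨⟨h 0, h 1⟩, h 2, h 3⟩

/-! ### Points of `Fin n` -/

def pf (n : ℕ) (hn : 0 < n) (x : ℕ) : Fin n := ⟨x % n, Nat.mod_lt _ hn⟩

lemma pf_inj {n : ℕ} (hn : 0 < n) {x y : ℕ} (hx : x < n) (hy : y < n) :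
    pf n hn x = pf n hn y ↔ x = y := by
  simp [pf, Fin.ext_iff, Nat.mod_eq_of_lt hx, Nat.mod_eq_of_lt hy]

lemma pf_ne {n : ℕ} (hn : 0 < n) {x y : ℕ} (hx : x < n) (hy : y < n) (h : x ≠ y) :
    pf n hn x ≠ pf n hn y := fun e => h ((pf_inj hn hx hy).1 e)

lemma pf_key {n : ℕ} (hn : 0 < n) (ξ : Equiv.Perm (Fin n)) {a b v w : ℕ}
    (ha : a < n) (hb : b < n) (hv : v < n) (hw : w < n)
    (h1 : ξ (pf n hn a) = pf n hn v) (h2 : ξ (pf n hn b) = pf n hn w) :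
    (a = b ↔ v = w) := by
  constructor
  · intro h
    rw [← pf_inj hn hv hw, ← h1, ← h2, (pf_inj hn ha hb).2 h]
  · intro h
    rw [← pf_inj hn ha hb]
    apply ξ.injective
    rw [h1, h2, (pf_inj hn hv hw).2 h]

/-! ### Adjacency machinery -/

def adjF {n : ℕ} (x : Equiv.Perm (Fin n)) (i : Fin (n - 1)) : Sym2 (Fin n) :=
  s(x ⟨i.val, by have := i.isLt; omega⟩, x ⟨i.val + 1, by have := i.isLt; omega⟩)

lemma bpAdj_eq {n : ℕ} (x : Equiv.Perm (Fin n)) :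
    bpAdj x = Finset.image (adjF x) Finset.univ := rfl

lemma adjF_inj {n : ℕ} (x : Equiv.Perm (Fin n)) : Function.Injective (adjF x) := by
  intro i j h
  simp only [adjF, Sym2.eq_iff] at h
  rcases h with ⟨h1, h2⟩ | ⟨h1, h2⟩ <;>
    · have e1 := x.injective h1
      have e2 := x.injective h2
      simp only [Fin.ext_iff] at e1 e2 ⊢
      omega

lemma card_inter_eq {n : ℕ} (x y : Equiv.Perm (Fin n)) :
    (bpAdj x ∩ bpAdj y).card
      = ((Finset.univ : Finset (Fin (n-1) × Fin (n-1))).filter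
          (fun p => adjF x p.1 = adjF y p.2)).card := by
  have himg : bpAdj x ∩ bpAdj y
      = Finset.image (fun p : Fin (n-1) × Fin (n-1) => adjF x p.1)
          ((Finset.univ : Finset (Fin (n-1) × Fin (n-1))).filter
            (fun p => adjF x p.1 = adjF y p.2)) := by
    ext z
    simp only [Finset.mem_inter, bpAdj_eq, Finset.mem_image, Finset.mem_filter,
      Finset.mem_univ, true_and, Prod.exists]
    constructor
    · rintro ⟨⟨i, rfl⟩, ⟨k, hk⟩⟩
      exact ⟨i, k, hk.symm, rfl⟩
    · rintro ⟨i, k, h, rfl⟩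
      exact ⟨⟨i, rfl⟩, ⟨k, h.symm⟩⟩
  rw [himg, Finset.card_image_of_injOn]
  intro p hp p' hp' h
  simp only [Finset.mem_coe, Finset.mem_filter] at hp hp'
  have h1 : p.1 = p'.1 := adjF_inj x h
  have h2 : p.2 = p'.2 := adjF_inj y (hp.2.symm.trans (h.trans hp'.2))
  exact Prod.ext h1 h2

lemma event_iff {n : ℕ} (hn : 0 < n) (ξ : Equiv.Perm (Fin n)) (i k : Fin (n - 1)) :
    (adjF (1 : Equiv.Perm (Fin n)) i = adjF ξ k) ↔
      ((ξ (pf n hn k.val) = pf n hn i.val ∧ ξ (pf n hn (k.val+1)) = pf n hn (i.val+1)) ∨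
       (ξ (pf n hn k.val) = pf n hn (i.val+1) ∧ ξ (pf n hn (k.val+1)) = pf n hn i.val)) := by
  have hi := i.isLt
  have hk := k.isLt
  have e1 : (⟨i.val, by omega⟩ : Fin n) = pf n hn i.val := by
    simp [pf, Fin.ext_iff, Nat.mod_eq_of_lt (by omega : i.val < n)]
  have e2 : (⟨i.val + 1, by omega⟩ : Fin n) = pf n hn (i.val+1) := by
    simp [pf, Fin.ext_iff, Nat.mod_eq_of_lt (by omega : i.val + 1 < n)]
  have e3 : (⟨k.val, by omega⟩ : Fin n) = pf n hn k.val := by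
    simp [pf, Fin.ext_iff, Nat.mod_eq_of_lt (by omega : k.val < n)]
  have e4 : (⟨k.val + 1, by omega⟩ : Fin n) = pf n hn (k.val+1) := by
    simp [pf, Fin.ext_iff, Nat.mod_eq_of_lt (by omega : k.val + 1 < n)]
  simp only [adjF, Equiv.Perm.one_apply, e1, e2, e3, e4, Sym2.eq_iff]
  constructor
  · rintro (⟨h1, h2⟩ | ⟨h1, h2⟩)
    · exact Or.inl ⟨h1.symm, h2.symm⟩
    · exact Or.inr ⟨h2.symm, h1.symm⟩
  · rintro (⟨h1, h2⟩ | ⟨h1, h2⟩)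
    · exact Or.inl ⟨h1.symm, h2.symm⟩
    · exact Or.inr ⟨h2.symm, h1.symm⟩

/-! ### generic filter-cardinality helpers -/

lemma filter_card_congr {α : Type*} [Fintype α] {p q : α → Prop}
    [DecidablePred p] [DecidablePred q] (h : ∀ x, p x ↔ q x) :
    (Finset.univ.filter p).card = (Finset.univ.filter q).card := by
  refine congrArg Finset.card ?_
  ext x
  simp only [Finset.mem_filter, Finset.mem_univ, true_and, h x]

lemma card_filter_or {α : Type*} [Fintype α] [DecidableEq α] {p q : α → Prop}
    [DecidablePred p] [DecidablePred q] (h : ∀ x, ¬(p x ∧ q x)) :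
    (Finset.univ.filter fun x => p x ∨ q x).card
      = (Finset.univ.filter p).card + (Finset.univ.filter q).card := by
  rw [Finset.filter_or]
  apply Finset.card_union_of_disjoint
  rw [Finset.disjoint_left]
  intro a ha hb
  simp only [Finset.mem_filter] at ha hb
  exact h a ⟨ha.2, hb.2⟩

lemma card_filter_zero {α : Type*} [Fintype α] {p : α → Prop} [DecidablePred p]
    (h : ∀ x, ¬ p x) : (Finset.univ.filter p).card = 0 := by
  rw [Finset.card_eq_zero, Finset.filter_eq_empty_iff]
  exact fun {x} _ => h x
/-! ### Cell counts -/

section cells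

variable {n : ℕ}

/-- orientation-A event: `ξ` maps positions `k, k+1` to `i, i+1`. -/
abbrev EvA {n : ℕ} (hn : 0 < n) (i k : Fin (n-1)) (ξ : Equiv.Perm (Fin n)) : Prop :=
  ξ (pf n hn k.val) = pf n hn i.val ∧ ξ (pf n hn (k.val+1)) = pf n hn (i.val+1)

/-- orientation-B event: `ξ` maps positions `k, k+1` to `i+1, i`. -/
abbrev EvB {n : ℕ} (hn : 0 < n) (i k : Fin (n-1)) (ξ : Equiv.Perm (Fin n)) : Prop :=
  ξ (pf n hn k.val) = pf n hn (i.val+1) ∧ ξ (pf n hn (k.val+1)) = pf n hn i.val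

lemma event_iff' (hn : 0 < n) (ξ : Equiv.Perm (Fin n)) (i k : Fin (n - 1)) :
    (adjF (1 : Equiv.Perm (Fin n)) i = adjF ξ k) ↔ (EvA hn i k ξ ∨ EvB hn i k ξ) :=
  event_iff hn ξ i k

lemma cell1 (hn : 0 < n) (i k : Fin (n-1)) :
    (Finset.univ.filter fun ξ : Equiv.Perm (Fin n) => adjF 1 i = adjF ξ k).card
      = 2 * (n-2).factorial := by
  have hi := i.isLt; have hk := k.isLt
  rw [filter_card_congr (fun ξ => event_iff' hn ξ i k), card_filter_or ?_]
  · have e1 : (Finset.univ.filter fun ξ : Equiv.Perm (Fin n) => EvA hn i k ξ).card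
        = (n-2).factorial :=
      count2 (pf_ne hn (by omega) (by omega) (by omega)) (pf_ne hn (by omega) (by omega) (by omega))
    have e2 : (Finset.univ.filter fun ξ : Equiv.Perm (Fin n) => EvB hn i k ξ).card
        = (n-2).factorial :=
      count2 (pf_ne hn (by omega) (by omega) (by omega)) (pf_ne hn (by omega) (by omega) (by omega))
    rw [e1, e2, two_mul]
  · rintro ξ ⟨⟨h1, _⟩, ⟨h2, _⟩⟩
    have := pf_key hn ξ (by omega) (by omega) (by omega) (by omega) h1 h2
    omega

lemma cell_swap (i k j l : Fin (n-1)) :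
    (Finset.univ.filter fun ξ : Equiv.Perm (Fin n) =>
        adjF 1 i = adjF ξ k ∧ adjF 1 j = adjF ξ l).card
    = (Finset.univ.filter fun ξ : Equiv.Perm (Fin n) =>
        adjF 1 j = adjF ξ l ∧ adjF 1 i = adjF ξ k).card :=
  filter_card_congr fun ξ => and_comm

lemma cell_eq (hn : 0 < n) (i k : Fin (n-1)) :
    (Finset.univ.filter fun ξ : Equiv.Perm (Fin n) =>
        adjF 1 i = adjF ξ k ∧ adjF 1 i = adjF ξ k).card = 2 * (n-2).factorial := by
  rw [filter_card_congr (fun ξ => and_self_iff)]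
  exact cell1 hn i k

lemma cell_zero_pos (i j : Fin (n-1)) {k l : Fin (n-1)} (h : k ≠ l) (hij : i = j) :
    (Finset.univ.filter fun ξ : Equiv.Perm (Fin n) =>
        adjF 1 i = adjF ξ k ∧ adjF 1 j = adjF ξ l).card = 0 := by
  apply card_filter_zero
  rintro ξ ⟨h1, h2⟩
  exact h (adjF_inj ξ (h1.symm.trans (hij ▸ h2)))

lemma cell_zero_idx {i j : Fin (n-1)} (k l : Fin (n-1)) (h : i ≠ j) (hkl : k = l) :
    (Finset.univ.filter fun ξ : Equiv.Perm (Fin n) =>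
        adjF 1 i = adjF ξ k ∧ adjF 1 j = adjF ξ l).card = 0 := by
  apply card_filter_zero
  rintro ξ ⟨h1, h2⟩
  exact h (adjF_inj (1 : Equiv.Perm (Fin n)) (h1.trans (hkl ▸ h2.symm)))

lemma cell_adj1 (hn : 0 < n) (i k j l : Fin (n-1))
    (hj : j.val = i.val + 1) (hl : l.val = k.val + 1) :
    (Finset.univ.filter fun ξ : Equiv.Perm (Fin n) =>
        adjF 1 i = adjF ξ k ∧ adjF 1 j = adjF ξ l).card = (n-3).factorial := by
  have hi := i.isLt; have hk := k.isLt; have hj' := j.isLt; have hl' := l.isLt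
  rw [filter_card_congr (q := fun ξ : Equiv.Perm (Fin n) =>
      ξ (pf n hn k.val) = pf n hn i.val ∧ ξ (pf n hn (k.val+1)) = pf n hn (i.val+1) ∧
        ξ (pf n hn (k.val+1+1)) = pf n hn (i.val+1+1)) ?_]
  · exact count3 (pf_ne hn (by omega) (by omega) (by omega))
      (pf_ne hn (by omega) (by omega) (by omega)) (pf_ne hn (by omega) (by omega) (by omega))
      (pf_ne hn (by omega) (by omega) (by omega)) (pf_ne hn (by omega) (by omega) (by omega))
      (pf_ne hn (by omega) (by omega) (by omega))
  intro ξ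
  rw [event_iff' hn, event_iff' hn]
  constructor
  · rintro ⟨A | A, B | B⟩
    · refine ⟨A.1, A.2, ?_⟩
      have B2 := B.2
      rw [show l.val + 1 = k.val + 1 + 1 by omega,
        show j.val + 1 = i.val + 1 + 1 by omega] at B2
      exact B2
    · have := pf_key hn ξ (by omega) (by omega) (by omega) (by omega) A.2 B.1; omega
    · have := pf_key hn ξ (by omega) (by omega) (by omega) (by omega) A.2 B.1; omega
    · have := pf_key hn ξ (by omega) (by omega) (by omega) (by omega) A.2 B.1; omega
  · rintro ⟨h1, h2, h3⟩
    refine ⟨Or.inl ⟨h1, h2⟩, Or.inl ⟨?_, ?_⟩⟩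
    · rw [hl, hj]; exact h2
    · rw [hl, hj]; exact h3

lemma cell_adj2 (hn : 0 < n) (i k j l : Fin (n-1))
    (hj : j.val = i.val + 1) (hk : k.val = l.val + 1) :
    (Finset.univ.filter fun ξ : Equiv.Perm (Fin n) =>
        adjF 1 i = adjF ξ k ∧ adjF 1 j = adjF ξ l).card = (n-3).factorial := by
  have hi := i.isLt; have hk' := k.isLt; have hj' := j.isLt; have hl' := l.isLt
  rw [filter_card_congr (q := fun ξ : Equiv.Perm (Fin n) =>
      ξ (pf n hn l.val) = pf n hn (i.val+1+1) ∧ ξ (pf n hn (l.val+1)) = pf n hn (i.val+1) ∧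
        ξ (pf n hn (l.val+1+1)) = pf n hn i.val) ?_]
  · exact count3 (pf_ne hn (by omega) (by omega) (by omega))
      (pf_ne hn (by omega) (by omega) (by omega)) (pf_ne hn (by omega) (by omega) (by omega))
      (pf_ne hn (by omega) (by omega) (by omega)) (pf_ne hn (by omega) (by omega) (by omega))
      (pf_ne hn (by omega) (by omega) (by omega))
  intro ξ
  rw [event_iff' hn, event_iff' hn]
  constructor
  · rintro ⟨A | A, B | B⟩
    · have := pf_key hn ξ (by omega) (by omega) (by omega) (by omega) A.1 B.2; omega
    · have := pf_key hn ξ (by omega) (by omega) (by omega) (by omega) A.1 B.2; omega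
    · have := pf_key hn ξ (by omega) (by omega) (by omega) (by omega) A.1 B.2; omega
    · have a1 := A.1; have a2 := A.2; have b1 := B.1
      rw [show j.val + 1 = i.val + 1 + 1 by omega] at b1
      rw [show (k.val : ℕ) = l.val + 1 by omega] at a1
      rw [show k.val + 1 = l.val + 1 + 1 by omega] at a2
      exact ⟨b1, a1, a2⟩
  · rintro ⟨h1, h2, h3⟩
    refine ⟨Or.inr ⟨?_, ?_⟩, Or.inr ⟨?_, ?_⟩⟩
    · rw [hk]; exact h2
    · rw [hk]; exact h3
    · rw [hj]; exact h1
    · rw [hj]; exact h2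

lemma cell_zero_adj_far (hn : 0 < n) (i k j l : Fin (n-1))
    (hj : j.val = i.val + 1)
    (hkl : k.val ≠ l.val ∧ k.val + 1 ≠ l.val ∧ l.val + 1 ≠ k.val) :
    (Finset.univ.filter fun ξ : Equiv.Perm (Fin n) =>
        adjF 1 i = adjF ξ k ∧ adjF 1 j = adjF ξ l).card = 0 := by
  have hi := i.isLt; have hk' := k.isLt; have hj' := j.isLt; have hl' := l.isLt
  apply card_filter_zero
  rintro ξ ⟨h1, h2⟩
  rw [event_iff' hn] at h1 h2
  rcases h1 with A | A <;> rcases h2 with B | B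
  · have := pf_key hn ξ (by omega) (by omega) (by omega) (by omega) A.2 B.1; omega
  · have := pf_key hn ξ (by omega) (by omega) (by omega) (by omega) A.2 B.2; omega
  · have := pf_key hn ξ (by omega) (by omega) (by omega) (by omega) A.1 B.1; omega
  · have := pf_key hn ξ (by omega) (by omega) (by omega) (by omega) A.1 B.2; omega

lemma cell_zero_far_adj (hn : 0 < n) (i k j l : Fin (n-1))
    (hij : i.val ≠ j.val ∧ i.val + 1 ≠ j.val ∧ j.val + 1 ≠ i.val)
    (hl : l.val = k.val + 1) :
    (Finset.univ.filter fun ξ : Equiv.Perm (Fin n) =>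
        adjF 1 i = adjF ξ k ∧ adjF 1 j = adjF ξ l).card = 0 := by
  have hi := i.isLt; have hk' := k.isLt; have hj' := j.isLt; have hl' := l.isLt
  apply card_filter_zero
  rintro ξ ⟨h1, h2⟩
  rw [event_iff' hn] at h1 h2
  rcases h1 with A | A <;> rcases h2 with B | B
  · have := pf_key hn ξ (by omega) (by omega) (by omega) (by omega) A.2 B.1; omega
  · have := pf_key hn ξ (by omega) (by omega) (by omega) (by omega) A.2 B.1; omega
  · have := pf_key hn ξ (by omega) (by omega) (by omega) (by omega) A.2 B.1; omega
  · have := pf_key hn ξ (by omega) (by omega) (by omega) (by omega) A.2 B.1; omega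

lemma cell_far_far (hn : 0 < n) (i k j l : Fin (n-1))
    (hij : i.val ≠ j.val ∧ i.val + 1 ≠ j.val ∧ j.val + 1 ≠ i.val)
    (hkl : k.val ≠ l.val ∧ k.val + 1 ≠ l.val ∧ l.val + 1 ≠ k.val) :
    (Finset.univ.filter fun ξ : Equiv.Perm (Fin n) =>
        adjF 1 i = adjF ξ k ∧ adjF 1 j = adjF ξ l).card = 4 * (n-4).factorial := by
  have hi := i.isLt; have hk' := k.isLt; have hj' := j.isLt; have hl' := l.isLt
  rw [filter_card_congr (q := fun ξ : Equiv.Perm (Fin n) =>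
      (EvA hn i k ξ ∧ EvA hn j l ξ) ∨ ((EvA hn i k ξ ∧ EvB hn j l ξ) ∨
        ((EvB hn i k ξ ∧ EvA hn j l ξ) ∨ (EvB hn i k ξ ∧ EvB hn j l ξ)))) ?_]
  · rw [card_filter_or ?_, card_filter_or ?_, card_filter_or ?_]
    · have e1 : (Finset.univ.filter fun ξ : Equiv.Perm (Fin n) =>
          EvA hn i k ξ ∧ EvA hn j l ξ).card = (n-4).factorial :=
        count4 (pf_ne hn (by omega) (by omega) (by omega)) (pf_ne hn (by omega) (by omega) (by omega))
          (pf_ne hn (by omega) (by omega) (by omega)) (pf_ne hn (by omega) (by omega) (by omega))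
          (pf_ne hn (by omega) (by omega) (by omega)) (pf_ne hn (by omega) (by omega) (by omega))
          (pf_ne hn (by omega) (by omega) (by omega)) (pf_ne hn (by omega) (by omega) (by omega))
          (pf_ne hn (by omega) (by omega) (by omega)) (pf_ne hn (by omega) (by omega) (by omega))
          (pf_ne hn (by omega) (by omega) (by omega)) (pf_ne hn (by omega) (by omega) (by omega))
      have e2 : (Finset.univ.filter fun ξ : Equiv.Perm (Fin n) =>
          EvA hn i k ξ ∧ EvB hn j l ξ).card = (n-4).factorial :=
        count4 (pf_ne hn (by omega) (by omega) (by omega)) (pf_ne hn (by omega) (by omega) (by omega))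
          (pf_ne hn (by omega) (by omega) (by omega)) (pf_ne hn (by omega) (by omega) (by omega))
          (pf_ne hn (by omega) (by omega) (by omega)) (pf_ne hn (by omega) (by omega) (by omega))
          (pf_ne hn (by omega) (by omega) (by omega)) (pf_ne hn (by omega) (by omega) (by omega))
          (pf_ne hn (by omega) (by omega) (by omega)) (pf_ne hn (by omega) (by omega) (by omega))
          (pf_ne hn (by omega) (by omega) (by omega)) (pf_ne hn (by omega) (by omega) (by omega))
      have e3 : (Finset.univ.filter fun ξ : Equiv.Perm (Fin n) =>
          EvB hn i k ξ ∧ EvA hn j l ξ).card = (n-4).factorial :=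
        count4 (pf_ne hn (by omega) (by omega) (by omega)) (pf_ne hn (by omega) (by omega) (by omega))
          (pf_ne hn (by omega) (by omega) (by omega)) (pf_ne hn (by omega) (by omega) (by omega))
          (pf_ne hn (by omega) (by omega) (by omega)) (pf_ne hn (by omega) (by omega) (by omega))
          (pf_ne hn (by omega) (by omega) (by omega)) (pf_ne hn (by omega) (by omega) (by omega))
          (pf_ne hn (by omega) (by omega) (by omega)) (pf_ne hn (by omega) (by omega) (by omega))
          (pf_ne hn (by omega) (by omega) (by omega)) (pf_ne hn (by omega) (by omega) (by omega))
      have e4 : (Finset.univ.filter fun ξ : Equiv.Perm (Fin n) =>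
          EvB hn i k ξ ∧ EvB hn j l ξ).card = (n-4).factorial :=
        count4 (pf_ne hn (by omega) (by omega) (by omega)) (pf_ne hn (by omega) (by omega) (by omega))
          (pf_ne hn (by omega) (by omega) (by omega)) (pf_ne hn (by omega) (by omega) (by omega))
          (pf_ne hn (by omega) (by omega) (by omega)) (pf_ne hn (by omega) (by omega) (by omega))
          (pf_ne hn (by omega) (by omega) (by omega)) (pf_ne hn (by omega) (by omega) (by omega))
          (pf_ne hn (by omega) (by omega) (by omega)) (pf_ne hn (by omega) (by omega) (by omega))
          (pf_ne hn (by omega) (by omega) (by omega)) (pf_ne hn (by omega) (by omega) (by omega))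
      rw [e1, e2, e3, e4]
      ring
    · intro ξ hx
      have := pf_key hn ξ (by omega) (by omega) (by omega) (by omega) hx.1.2.1 hx.2.2.1; omega
    · intro ξ hx
      rcases hx.2 with hc | hc <;>
        · have := pf_key hn ξ (by omega) (by omega) (by omega) (by omega) hx.1.1.1 hc.1.1; omega
    · intro ξ hx
      rcases hx.2 with hc | hc | hc
      · have := pf_key hn ξ (by omega) (by omega) (by omega) (by omega) hx.1.2.1 hc.2.1; omega
      · have := pf_key hn ξ (by omega) (by omega) (by omega) (by omega) hx.1.1.1 hc.1.1; omega
      · have := pf_key hn ξ (by omega) (by omega) (by omega) (by omega) hx.1.1.1 hc.1.1; omega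
  · intro ξ
    rw [event_iff' hn, event_iff' hn]
    tauto

end cells
/-! ### Indicators and classification -/

section classify

variable {n : ℕ}

def eInd {M : ℕ} (i j : Fin M) : ℕ := if i.val = j.val then 1 else 0
def aInd {M : ℕ} (i j : Fin M) : ℕ := if i.val + 1 = j.val ∨ j.val + 1 = i.val then 1 else 0
def wInd {M : ℕ} (i j : Fin M) : ℕ :=
  if i.val ≠ j.val ∧ i.val + 1 ≠ j.val ∧ j.val + 1 ≠ i.val then 1 else 0

lemma eInd_one {M : ℕ} {i j : Fin M} (h : i.val = j.val) : eInd i j = 1 := by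
  unfold eInd; exact if_pos h
lemma eInd_zero {M : ℕ} {i j : Fin M} (h : i.val ≠ j.val) : eInd i j = 0 := by
  unfold eInd; exact if_neg h
lemma aInd_one {M : ℕ} {i j : Fin M} (h : i.val + 1 = j.val ∨ j.val + 1 = i.val) :
    aInd i j = 1 := by unfold aInd; exact if_pos h
lemma aInd_zero {M : ℕ} {i j : Fin M} (h : ¬(i.val + 1 = j.val ∨ j.val + 1 = i.val)) :
    aInd i j = 0 := by unfold aInd; exact if_neg h
lemma wInd_one {M : ℕ} {i j : Fin M}
    (h : i.val ≠ j.val ∧ i.val + 1 ≠ j.val ∧ j.val + 1 ≠ i.val) : wInd i j = 1 := by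
  unfold wInd; exact if_pos h
lemma wInd_zero {M : ℕ} {i j : Fin M}
    (h : ¬(i.val ≠ j.val ∧ i.val + 1 ≠ j.val ∧ j.val + 1 ≠ i.val)) : wInd i j = 0 := by
  unfold wInd; exact if_neg h

lemma cell_formula (hn : 0 < n) (i k j l : Fin (n-1)) :
    (Finset.univ.filter fun ξ : Equiv.Perm (Fin n) =>
        adjF 1 i = adjF ξ k ∧ adjF 1 j = adjF ξ l).card
      = eInd i j * eInd k l * (2 * (n-2).factorial)
        + aInd i j * aInd k l * (n-3).factorial
        + wInd i j * wInd k l * (4 * (n-4).factorial) := by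
  have hiv := i.isLt; have hkv := k.isLt; have hjv := j.isLt; have hlv := l.isLt
  by_cases hij : i = j
  · by_cases hkl : k = l
    · subst hij; subst hkl
      rw [cell_eq hn i k, eInd_one rfl, eInd_one rfl, aInd_zero (by omega),
        wInd_zero (by omega)]
      ring
    · rw [cell_zero_pos i j hkl hij, hij, eInd_one rfl,
        eInd_zero (fun h => hkl (Fin.ext h)), aInd_zero (by omega), wInd_zero (by omega)]
      ring
  · have hij' : i.val ≠ j.val := fun h => hij (Fin.ext h)
    by_cases hadj : i.val + 1 = j.val ∨ j.val + 1 = i.val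
    · by_cases hkl : k = l
      · rw [cell_zero_idx k l hij hkl, eInd_zero hij', hkl, aInd_zero (i := l) (j := l) (by omega),
          wInd_zero (i := i) (j := j) (by omega)]
        ring
      · have hkl' : k.val ≠ l.val := fun h => hkl (Fin.ext h)
        by_cases hadjkl : k.val + 1 = l.val ∨ l.val + 1 = k.val
        · have hmain : (Finset.univ.filter fun ξ : Equiv.Perm (Fin n) =>
              adjF 1 i = adjF ξ k ∧ adjF 1 j = adjF ξ l).card = (n-3).factorial := by
            rcases hadj with h1 | h1 <;> rcases hadjkl with h2 | h2
            · exact cell_adj1 hn i k j l h1.symm h2.symm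
            · exact cell_adj2 hn i k j l h1.symm h2.symm
            · rw [cell_swap]; exact cell_adj2 hn j l i k h1.symm h2.symm
            · rw [cell_swap]; exact cell_adj1 hn j l i k h1.symm h2.symm
          rw [hmain, eInd_zero hij', aInd_one hadj, aInd_one hadjkl, wInd_zero (by omega)]
          ring
        · have hmain : (Finset.univ.filter fun ξ : Equiv.Perm (Fin n) =>
              adjF 1 i = adjF ξ k ∧ adjF 1 j = adjF ξ l).card = 0 := by
            rcases hadj with h1 | h1
            · exact cell_zero_adj_far hn i k j l h1.symm (by omega)
            · rw [cell_swap]; exact cell_zero_adj_far hn j l i k h1.symm (by omega)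
          rw [hmain, eInd_zero hij', aInd_zero hadjkl, wInd_zero (i := i) (j := j) (by omega)]
          ring
    · by_cases hkl : k = l
      · rw [cell_zero_idx k l hij hkl, eInd_zero hij', aInd_zero hadj, hkl,
          wInd_zero (i := l) (j := l) (by omega)]
        ring
      · have hkl' : k.val ≠ l.val := fun h => hkl (Fin.ext h)
        by_cases hadjkl : k.val + 1 = l.val ∨ l.val + 1 = k.val
        · have hmain : (Finset.univ.filter fun ξ : Equiv.Perm (Fin n) =>
              adjF 1 i = adjF ξ k ∧ adjF 1 j = adjF ξ l).card = 0 := by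
            rcases hadjkl with h2 | h2
            · exact cell_zero_far_adj hn i k j l (by omega) h2.symm
            · rw [cell_swap]; exact cell_zero_far_adj hn j l i k (by omega) h2.symm
          rw [hmain, eInd_zero hij', aInd_zero hadj, wInd_zero (i := k) (j := l) (by omega)]
          ring
        · rw [cell_far_far hn i k j l (by omega) (by omega), eInd_zero hij',
            aInd_zero hadj, wInd_one (i := i) (j := j) (by omega),
            wInd_one (i := k) (j := l) (by omega)]
          ring

/-! ### index sums -/

lemma count_val (M c : ℕ) : (∑ j : Fin M, if c = j.val then 1 else 0) = if c < M then 1 else 0 := by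
  have : (∑ j : Fin M, if c = j.val then 1 else 0)
      = ∑ x ∈ Finset.range M, (if c = x then 1 else 0) :=
    Fin.sum_univ_eq_sum_range (fun x => if c = x then 1 else 0) M
  rw [this, Finset.sum_ite_eq]
  simp [Finset.mem_range]

lemma sum_eInd (M : ℕ) : (∑ i : Fin M, ∑ j : Fin M, eInd i j) = M := by
  have h : ∀ i : Fin M, (∑ j : Fin M, eInd i j) = 1 := by
    intro i
    unfold eInd
    rw [count_val M i.val]
    exact if_pos i.isLt
  rw [Finset.sum_congr rfl (fun i _ => h i), Finset.sum_const, Finset.card_univ,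
    Fintype.card_fin, smul_eq_mul, mul_one]

lemma sum_shift (M : ℕ) :
    (∑ i : Fin M, ∑ j : Fin M, if i.val + 1 = j.val then 1 else 0) = M - 1 := by
  have h : ∀ i : Fin M, (∑ j : Fin M, if i.val + 1 = j.val then 1 else 0)
      = if i.val + 1 < M then 1 else 0 := fun i => count_val M (i.val + 1)
  rw [Finset.sum_congr rfl (fun i _ => h i)]
  have : (∑ i : Fin M, if i.val + 1 < M then 1 else 0)
      = ∑ x ∈ Finset.range M, (if x + 1 < M then 1 else 0) :=
    Fin.sum_univ_eq_sum_range (fun x => if x + 1 < M then 1 else 0) M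
  rw [this, Finset.sum_boole]
  have : (Finset.range M).filter (fun x => x + 1 < M) = Finset.range (M - 1) := by
    ext a
    simp only [Finset.mem_filter, Finset.mem_range]
    omega
  rw [this, Finset.card_range]
  simp

lemma sum_aInd (M : ℕ) : (∑ i : Fin M, ∑ j : Fin M, aInd i j) = 2 * (M - 1) := by
  have key : ∀ i j : Fin M, aInd i j
      = (if i.val + 1 = j.val then 1 else 0) + (if j.val + 1 = i.val then 1 else 0) := by
    intro i j
    unfold aInd
    split_ifs <;> omega
  calc (∑ i : Fin M, ∑ j : Fin M, aInd i j)
      = (∑ i : Fin M, ∑ j : Fin M, ((if i.val + 1 = j.val then 1 else 0)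
          + (if j.val + 1 = i.val then 1 else 0))) := by
        exact Finset.sum_congr rfl fun i _ => Finset.sum_congr rfl fun j _ => key i j
    _ = (∑ i : Fin M, ∑ j : Fin M, if i.val + 1 = j.val then 1 else 0)
          + (∑ i : Fin M, ∑ j : Fin M, if j.val + 1 = i.val then 1 else 0) := by
        rw [← Finset.sum_add_distrib]
        exact Finset.sum_congr rfl fun i _ => Finset.sum_add_distrib
    _ = (M - 1) + (M - 1) := by
        rw [sum_shift]
        rw [Finset.sum_comm]
        rw [sum_shift]
    _ = 2 * (M - 1) := by ring

lemma sum_wInd (M : ℕ) :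
    (∑ i : Fin M, ∑ j : Fin M, wInd i j) = (M - 1) * (M - 2) := by
  have key : ∀ i j : Fin M, eInd i j + aInd i j + wInd i j = 1 := by
    intro i j
    unfold eInd aInd wInd
    split_ifs <;> omega
  have total : (∑ i : Fin M, ∑ j : Fin M, (eInd i j + aInd i j + wInd i j)) = M * M := by
    rw [Finset.sum_congr rfl (fun i _ => Finset.sum_congr rfl (fun j _ => key i j))]
    simp [mul_comm]
  have expand : (∑ i : Fin M, ∑ j : Fin M, (eInd i j + aInd i j + wInd i j))
      = (∑ i : Fin M, ∑ j : Fin M, eInd i j) + (∑ i : Fin M, ∑ j : Fin M, aInd i j)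
        + (∑ i : Fin M, ∑ j : Fin M, wInd i j) := by
    rw [← Finset.sum_add_distrib, ← Finset.sum_add_distrib]
    refine Finset.sum_congr rfl fun i _ => ?_
    rw [← Finset.sum_add_distrib, ← Finset.sum_add_distrib]
  rw [expand, sum_eInd, sum_aInd] at total
  cases M with
  | zero => simpa using total
  | succ m =>
    cases m with
    | zero => omega
    | succ p =>
      rw [show p + 1 + 1 - 1 = p + 1 by omega] at total
      rw [show p + 1 + 1 - 1 = p + 1 by omega, show p + 1 + 1 - 2 = p by omega]
      have ht : (p + 2) * (p + 2) = (p + 2) + 2 * (p + 1) + (p + 1) * p := by ring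
      rw [show ((p:ℕ) + 1 + 1) * (p + 1 + 1) = (p + 2) * (p + 2) by ring, ht] at total
      linarith

end classify
/-! ### Grand sums -/

section grand

variable {n : ℕ}

lemma indicator_mul {P Q : Prop} [Decidable P] [Decidable Q] :
    ((if P then 1 else 0) * (if Q then 1 else 0) : ℕ) = if P ∧ Q then 1 else 0 := by
  by_cases hP : P <;> by_cases hQ : Q <;> simp [hP, hQ]

lemma pull {γ : Type*} [Fintype γ] (h : γ → γ → ℕ) (c : ℕ) :
    (∑ p : γ, ∑ q : γ, h p q * c) = (∑ p : γ, ∑ q : γ, h p q) * c := by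
  rw [Finset.sum_mul]
  exact Finset.sum_congr rfl fun p _ => (Finset.sum_mul _ _ _).symm

lemma pull3 {γ : Type*} [Fintype γ] (f g h : γ → γ → ℕ) (a b c : ℕ) :
    (∑ p : γ, ∑ q : γ, (f p q * a + g p q * b + h p q * c))
      = (∑ p : γ, ∑ q : γ, f p q) * a + (∑ p : γ, ∑ q : γ, g p q) * b
        + (∑ p : γ, ∑ q : γ, h p q) * c := by
  simp only [Finset.sum_add_distrib]
  rw [pull f a, pull g b, pull h c]

lemma sum_sep {M : ℕ} (f g : Fin M → Fin M → ℕ) :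
    (∑ p : Fin M × Fin M, ∑ q : Fin M × Fin M, f p.1 q.1 * g p.2 q.2)
      = (∑ i : Fin M, ∑ j : Fin M, f i j) * (∑ k : Fin M, ∑ l : Fin M, g k l) := by
  have step1 : ∀ p : Fin M × Fin M,
      (∑ q : Fin M × Fin M, f p.1 q.1 * g p.2 q.2)
        = (∑ j : Fin M, f p.1 j) * (∑ l : Fin M, g p.2 l) := by
    intro p
    rw [Fintype.sum_prod_type, Finset.sum_mul_sum]
  rw [Finset.sum_congr rfl (fun p _ => step1 p), Fintype.sum_prod_type,
    Finset.sum_mul_sum]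

lemma hcard_eq (ξ : Equiv.Perm (Fin n)) :
    (bpAdj (1 : Equiv.Perm (Fin n)) ∩ bpAdj ξ).card
      = ∑ p : Fin (n-1) × Fin (n-1), if adjF 1 p.1 = adjF ξ p.2 then 1 else 0 := by
  rw [card_inter_eq, Finset.card_filter]

lemma grand_S1 (hn : 0 < n) :
    (∑ ξ : Equiv.Perm (Fin n), (bpAdj (1 : Equiv.Perm (Fin n)) ∩ bpAdj ξ).card)
      = (n-1) * (n-1) * (2 * (n-2).factorial) := by
  rw [Finset.sum_congr rfl (fun ξ _ => hcard_eq ξ), Finset.sum_comm]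
  have h : ∀ p : Fin (n-1) × Fin (n-1),
      (∑ ξ : Equiv.Perm (Fin n), if adjF 1 p.1 = adjF ξ p.2 then 1 else 0)
        = 2 * (n-2).factorial := by
    intro p
    rw [← Finset.card_filter]
    exact cell1 hn p.1 p.2
  rw [Finset.sum_congr rfl (fun p _ => h p), Finset.sum_const, Finset.card_univ,
    Fintype.card_prod, Fintype.card_fin, smul_eq_mul, mul_assoc]

set_option maxHeartbeats 1000000 in
lemma grand_S2 (hn4 : 4 ≤ n) :
    (∑ ξ : Equiv.Perm (Fin n), ((bpAdj (1 : Equiv.Perm (Fin n)) ∩ bpAdj ξ).card)^2)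
      = (n-1) * (n-1) * (2 * (n-2).factorial)
        + (2 * (n-2)) * (2 * (n-2)) * (n-3).factorial
        + ((n-2) * (n-3)) * ((n-2) * (n-3)) * (4 * (n-4).factorial) := by
  have hn : 0 < n := by omega
  calc (∑ ξ : Equiv.Perm (Fin n), ((bpAdj (1 : Equiv.Perm (Fin n)) ∩ bpAdj ξ).card)^2)
      = ∑ ξ : Equiv.Perm (Fin n), ∑ p : Fin (n-1) × Fin (n-1), ∑ q : Fin (n-1) × Fin (n-1),
          ((if adjF 1 p.1 = adjF ξ p.2 then 1 else 0) * (if adjF 1 q.1 = adjF ξ q.2 then 1 else 0)) := by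
        refine Finset.sum_congr rfl fun ξ _ => ?_
        rw [sq, hcard_eq ξ, Finset.sum_mul_sum]
    _ = ∑ p : Fin (n-1) × Fin (n-1), ∑ q : Fin (n-1) × Fin (n-1), ∑ ξ : Equiv.Perm (Fin n),
          ((if adjF 1 p.1 = adjF ξ p.2 then 1 else 0) * (if adjF 1 q.1 = adjF ξ q.2 then 1 else 0)) := by
        rw [Finset.sum_comm]
        exact Finset.sum_congr rfl fun p _ => Finset.sum_comm
    _ = ∑ p : Fin (n-1) × Fin (n-1), ∑ q : Fin (n-1) × Fin (n-1),
          (eInd p.1 q.1 * eInd p.2 q.2 * (2 * (n-2).factorial)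
            + aInd p.1 q.1 * aInd p.2 q.2 * (n-3).factorial
            + wInd p.1 q.1 * wInd p.2 q.2 * (4 * (n-4).factorial)) := by
        refine Finset.sum_congr rfl fun p _ => Finset.sum_congr rfl fun q _ => ?_
        rw [Finset.sum_congr rfl (fun ξ (_ : ξ ∈ Finset.univ) => indicator_mul),
          ← Finset.card_filter]
        exact cell_formula hn p.1 p.2 q.1 q.2
    _ = (∑ p : Fin (n-1) × Fin (n-1), ∑ q : Fin (n-1) × Fin (n-1),
            eInd p.1 q.1 * eInd p.2 q.2) * (2 * (n-2).factorial)
        + (∑ p : Fin (n-1) × Fin (n-1), ∑ q : Fin (n-1) × Fin (n-1),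
            aInd p.1 q.1 * aInd p.2 q.2) * (n-3).factorial
        + (∑ p : Fin (n-1) × Fin (n-1), ∑ q : Fin (n-1) × Fin (n-1),
            wInd p.1 q.1 * wInd p.2 q.2) * (4 * (n-4).factorial) := by
        simp only [Finset.sum_add_distrib, ← Finset.sum_mul]
    _ = (n-1) * (n-1) * (2 * (n-2).factorial)
        + (2 * (n-2)) * (2 * (n-2)) * (n-3).factorial
        + ((n-2) * (n-3)) * ((n-2) * (n-3)) * (4 * (n-4).factorial) := by
        rw [sum_sep eInd eInd, sum_sep aInd aInd, sum_sep wInd wInd,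
          sum_eInd, sum_aInd, sum_wInd,
          show (n - 1) - 1 = n - 2 by omega, show (n - 1) - 2 = n - 3 by omega]

end grand
/-! ### Main theorem -/

lemma fac_cast2 (m : ℕ) : (((m+2).factorial : ℕ) : ℚ)
    = ((m:ℚ)+2) * ((m:ℚ)+1) * (m.factorial : ℚ) := by
  have : (m+2).factorial = (m+2) * ((m+1) * m.factorial) := by
    rw [show m + 2 = (m+1)+1 by omega, Nat.factorial_succ, Nat.factorial_succ]
  rw [this]
  push_cast
  ring

lemma fac_cast1 (m : ℕ) : (((m+1).factorial : ℕ) : ℚ) = ((m:ℚ)+1) * (m.factorial : ℚ) := by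
  rw [Nat.factorial_succ]
  push_cast
  ring

lemma fac_cast4 (m : ℕ) : (((m+4).factorial : ℕ) : ℚ)
    = ((m:ℚ)+4) * ((m:ℚ)+3) * ((m:ℚ)+2) * ((m:ℚ)+1) * (m.factorial : ℚ) := by
  have : (m+4).factorial = (m+4) * ((m+3) * ((m+2) * ((m+1) * m.factorial))) := by
    rw [show m + 4 = (m+3)+1 by omega, Nat.factorial_succ,
      show m + 3 = (m+2)+1 by omega, Nat.factorial_succ,
      show m + 2 = (m+1)+1 by omega, Nat.factorial_succ, Nat.factorial_succ]
  rw [this]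
  push_cast
  ring

/-- For a uniformly random permutation ξ of S_n (n ≥ 4), the variance of the number
of common adjacencies with the identity equals
(2(n-1)/n)(1 - 2(n-1)/n) + 4(n-2)(n-3)/(n(n-1)) + 4(n-2)/(n(n-1)). -/
theorem variance_common_adjacencies (n : ℕ) (hn : 4 ≤ n) :
    (∑ ξ : Equiv.Perm (Fin n),
        (((bpAdj (1 : Equiv.Perm (Fin n)) ∩ bpAdj ξ).card : ℚ)
          - 2 * ((n : ℚ) - 1) / n) ^ 2) / (n.factorial : ℚ)
      = (2 * ((n : ℚ) - 1) / n) * (1 - 2 * ((n : ℚ) - 1) / n)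
        + 4 * ((n : ℚ) - 2) * ((n : ℚ) - 3) / ((n : ℚ) * ((n : ℚ) - 1))
        + 4 * ((n : ℚ) - 2) / ((n : ℚ) * ((n : ℚ) - 1)) := by
  obtain ⟨m, rfl⟩ : ∃ m, n = m + 4 := ⟨n - 4, by omega⟩
  have hn0 : (0:ℕ) < m + 4 := by omega
  set μ : ℚ := 2 * (((m + 4 : ℕ) : ℚ) - 1) / ((m + 4 : ℕ) : ℚ) with hμ
  have hS1 : (∑ ξ : Equiv.Perm (Fin (m+4)),
      ((bpAdj (1 : Equiv.Perm (Fin (m+4))) ∩ bpAdj ξ).card : ℚ))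
      = ((m:ℚ)+3) * ((m:ℚ)+3) * (2 * ((m+2).factorial : ℚ)) := by
    rw [← Nat.cast_sum, grand_S1 hn0,
      show (m+4) - 1 = m + 3 by omega, show (m+4) - 2 = m + 2 by omega]
    push_cast
    ring
  have hS2 : (∑ ξ : Equiv.Perm (Fin (m+4)),
      ((bpAdj (1 : Equiv.Perm (Fin (m+4))) ∩ bpAdj ξ).card : ℚ)^2)
      = ((m:ℚ)+3) * ((m:ℚ)+3) * (2 * ((m+2).factorial : ℚ))
        + (2 * ((m:ℚ)+2)) * (2 * ((m:ℚ)+2)) * ((m+1).factorial : ℚ)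
        + (((m:ℚ)+2) * ((m:ℚ)+1)) * (((m:ℚ)+2) * ((m:ℚ)+1)) * (4 * (m.factorial : ℚ)) := by
    have cast_eq : (∑ ξ : Equiv.Perm (Fin (m+4)),
        ((bpAdj (1 : Equiv.Perm (Fin (m+4))) ∩ bpAdj ξ).card : ℚ)^2)
        = ((∑ ξ : Equiv.Perm (Fin (m+4)),
            ((bpAdj (1 : Equiv.Perm (Fin (m+4))) ∩ bpAdj ξ).card)^2 : ℕ) : ℚ) := by
      rw [Nat.cast_sum]
      exact Finset.sum_congr rfl fun ξ _ => (Nat.cast_pow _ _).symm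
    rw [cast_eq, grand_S2 (by omega : 4 ≤ m + 4),
      show (m+4) - 1 = m + 3 by omega, show (m+4) - 2 = m + 2 by omega,
      show (m+4) - 3 = m + 1 by omega, show (m+4) - 4 = m by omega]
    push_cast
    ring
  have expand : (∑ ξ : Equiv.Perm (Fin (m+4)),
      (((bpAdj (1 : Equiv.Perm (Fin (m+4))) ∩ bpAdj ξ).card : ℚ) - μ)^2)
      = (∑ ξ : Equiv.Perm (Fin (m+4)),
          ((bpAdj (1 : Equiv.Perm (Fin (m+4))) ∩ bpAdj ξ).card : ℚ)^2)
        - 2*μ*(∑ ξ : Equiv.Perm (Fin (m+4)),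
            ((bpAdj (1 : Equiv.Perm (Fin (m+4))) ∩ bpAdj ξ).card : ℚ))
        + ((m+4).factorial : ℚ) * μ^2 := by
    have e : ∀ x : ℚ, (x - μ)^2 = x^2 - 2*μ*x + μ^2 := fun x => by ring
    rw [Finset.sum_congr rfl (fun ξ (_ : ξ ∈ Finset.univ) => e _),
      Finset.sum_add_distrib, Finset.sum_sub_distrib, ← Finset.mul_sum,
      Finset.sum_const, Finset.card_univ, Fintype.card_perm, Fintype.card_fin,
      nsmul_eq_mul]
  rw [expand, hS1, hS2, hμ]
  have hfacpos : (0:ℚ) < (m.factorial : ℚ) := by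
    exact_mod_cast m.factorial_pos
  have h4 : ((m:ℚ)+4) ≠ 0 := by positivity
  have h3 : ((m:ℚ)+3) ≠ 0 := by positivity
  have h2 : ((m:ℚ)+2) ≠ 0 := by positivity
  have h1 : ((m:ℚ)+1) ≠ 0 := by positivity
  have hF : (m.factorial : ℚ) ≠ 0 := ne_of_gt hfacpos
  rw [fac_cast4, fac_cast2, fac_cast1]
  push_cast
  have hr : ((m:ℚ) + 4) - 1 = (m:ℚ) + 3 := by ring
  rw [hr]
  field_simp
  ring
end

section
/- Let I be a segment set of S_n (a union of pairwise strongly disjoint segments, i.e., a subset of the adjacency set of some permutation) with m adjacencies and k segments (maximal connected components). Then the number of permutations in S_n whose adjacency set contains I equals 2^k · (n - m)!. -/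
open Finset

/-- The number of segments (connected components) of a segment set `I`, i.e. the
number of connected components of the graph with edge set I meeting some edge of I. -/
noncomputable def numSegments {n : ℕ} (I : Finset (Sym2 (Fin n))) : ℕ :=
  Nat.card {c : (SimpleGraph.fromEdgeSet (↑I : Set (Sym2 (Fin n)))).ConnectedComponent //
    ∃ v : Fin n, (∃ e ∈ I, v ∈ e) ∧
      (SimpleGraph.fromEdgeSet (↑I : Set (Sym2 (Fin n)))).connectedComponentMk v = c}

/-!
A permutation contains `I` exactly when the list of its values has every pair of `I` as two
consecutive entries, so we count *arrangements*: duplicate-free enumerations of a finite set `V`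
in which every pair of a prescribed set `E` is consecutive. Suppose the pairs of `E` are
consecutive in some fixed duplicate-free list `L` with head `b`. Either `b` lies on no pair of
`E`, or on exactly one, `{b, a}` with `a` the next entry of `L`. In the second case deleting `b`
maps the arrangements of `V` for `E` onto those of `V \ {b}` for `E \ {ab}`; a fibre has two
elements (`b` on either side of `a`) if `a` lies on no other pair of `E`, and one otherwise
(the other side of `a` is taken by its second neighbour). By induction on `L`,
`#arrangements · 2^|E| = 2^|V(E)| · (|V| - |E|)!`.

Every segment of `I` has exactly one vertex that is not the later entry, in `π`, of one of its
adjacencies, namely its first entry; hence `|V(I)| = k + m`.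
-/

namespace List

variable {α : Type*}

def adjPairs (l : List α) : List (Sym2 α) := zipWith (fun x y => s(x, y)) l l.tail

@[simp] lemma adjPairs_nil : ([] : List α).adjPairs = [] := rfl

@[simp] lemma adjPairs_singleton (x : α) : [x].adjPairs = [] := rfl

@[simp] lemma adjPairs_cons_cons (x y : α) (l : List α) :
    (x :: y :: l).adjPairs = s(x, y) :: (y :: l).adjPairs := rfl

lemma adjPairs_sublist_cons (x : α) (l : List α) : l.adjPairs <+ (x :: l).adjPairs := by
  cases l with
  | nil => simp
  | cons y l => simp

lemma mem_of_mem_adjPairs {l : List α} {f : Sym2 α} {x : α} (hf : f ∈ l.adjPairs)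
    (hx : x ∈ f) : x ∈ l := by
  induction l with
  | nil => simp at hf
  | cons y l ih =>
    cases l with
    | nil => simp at hf
    | cons z l =>
      rw [adjPairs_cons_cons, mem_cons] at hf
      rcases hf with rfl | hf
      · rcases Sym2.mem_iff.mp hx with rfl | rfl <;> simp
      · exact mem_cons_of_mem y (ih hf)

lemma adjPairs_append_cons (l₁ : List α) (x : α) (l₂ : List α) :
    (l₁ ++ x :: l₂).adjPairs = (l₁ ++ [x]).adjPairs ++ (x :: l₂).adjPairs := by
  induction l₁ with
  | nil => simp
  | cons y l₁ ih =>
    cases l₁ with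
    | nil => simp
    | cons z l₁ => simpa using ih

lemma adjPairs_reverse (l : List α) : l.reverse.adjPairs = l.adjPairs.reverse := by
  induction l with
  | nil => simp
  | cons x l ih =>
    cases l with
    | nil => simp
    | cons y l =>
      rw [reverse_cons, reverse_cons, append_assoc, singleton_append, adjPairs_append_cons,
        ← reverse_cons, ih]
      simp [Sym2.eq_swap]

lemma mem_head?_of_mem_adjPairs_cons {a z : α} {q : List α} (hnd : (a :: q).Nodup)
    (h : s(a, z) ∈ (a :: q).adjPairs) : z ∈ q.head? := by
  cases q with
  | nil => simp at h
  | cons y q =>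
    rw [adjPairs_cons_cons, mem_cons, Sym2.congr_right] at h
    rcases h with rfl | h
    · simp
    · exact absurd (mem_of_mem_adjPairs h (Sym2.mem_mk_left a z)) (nodup_cons.mp hnd).1

lemma mem_getLast?_or_mem_head?_of_mem_adjPairs {p q : List α} {a z : α}
    (hnd : (p ++ a :: q).Nodup) (h : s(a, z) ∈ (p ++ a :: q).adjPairs) :
    z ∈ p.getLast? ∨ z ∈ q.head? := by
  rw [adjPairs_append_cons, mem_append] at h
  rcases h with h | h
  · have hrev : p ++ [a] = (a :: p.reverse).reverse := by simp
    rw [hrev, adjPairs_reverse, mem_reverse] at h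
    have hnd' : (a :: p.reverse).Nodup := by
      rw [← nodup_reverse, ← hrev]
      exact hnd.sublist (by simp)
    exact .inl (head?_reverse ▸ mem_head?_of_mem_adjPairs_cons hnd' h)
  · exact .inr (mem_head?_of_mem_adjPairs_cons (hnd.sublist (sublist_append_right p _)) h)

lemma mem_adjPairs_erase [DecidableEq α] {l : List α} {f : Sym2 α} {b : α}
    (hf : f ∈ l.adjPairs) (hb : b ∉ f) : f ∈ (l.erase b).adjPairs := by
  induction l with
  | nil => simp at hf
  | cons x l ih =>
    cases l with
    | nil => simp at hf
    | cons y l =>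
      rw [adjPairs_cons_cons, mem_cons] at hf
      by_cases hxb : x = b
      · subst hxb
        rcases hf with rfl | hf
        · simp at hb
        · simpa using hf
      · rw [erase_cons_tail (by simpa using hxb)]
        rcases hf with rfl | hf
        · have hyb : y ≠ b := fun h => hb (h ▸ Sym2.mem_mk_right x y)
          rw [erase_cons_tail (by simpa using hyb), adjPairs_cons_cons]
          exact mem_cons_self
        · exact (adjPairs_sublist_cons x _).subset (ih hf)

lemma eq_or_eq_of_erase_eq [DecidableEq α] {l p q : List α} {a b : α} (hl : l.Nodup)
    (hab : s(b, a) ∈ l.adjPairs) (he : l.erase b = p ++ a :: q) :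
    l = p ++ b :: a :: q ∨ l = p ++ a :: b :: q := by
  have hapq : a ∉ p ∧ a ∉ q := by
    simpa [not_or] using (nodup_cons.mp (nodup_middle.mp (he ▸ hl.erase b))).1
  obtain ⟨u, v, rfl⟩ := mem_iff_append.mp (mem_of_mem_adjPairs hab (Sym2.mem_mk_left b a))
  have hbu : b ∉ u := fun h => (nodup_cons.mp (nodup_middle.mp hl)).1 (mem_append_left v h)
  rw [erase_append_right _ hbu, erase_cons_head] at he
  rcases mem_getLast?_or_mem_head?_of_mem_adjPairs hl hab with ha | ha
  · obtain ⟨u, rfl⟩ := getLast?_eq_some_iff.mp ha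
    obtain ⟨rfl, -, rfl⟩ :=
      (append_cons_inj_of_notMem hapq.1 hapq.2).mp (by simpa using he.symm)
    simp
  · obtain ⟨v, rfl⟩ := head?_eq_some_iff.mp ha
    obtain ⟨rfl, -, rfl⟩ := (append_cons_inj_of_notMem hapq.1 hapq.2).mp he.symm
    simp

lemma adjPairs_ofFn {n : ℕ} (f : Fin n → α) :
    (ofFn f).adjPairs =
      ofFn fun i : Fin (n - 1) => s(f ⟨i, by omega⟩, f ⟨i + 1, by omega⟩) := by
  refine ext_getElem (by simp [adjPairs]) fun i _ _ => ?_
  simp [adjPairs]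

lemma nodup_insert_beside {p q : List α} {a b : α} (hnd : (p ++ a :: q).Nodup)
    (hb : b ∉ p ++ a :: q) : (p ++ b :: a :: q).Nodup ∧ (p ++ a :: b :: q).Nodup := by
  refine ⟨nodup_middle.mpr (nodup_cons.mpr ⟨hb, hnd⟩), ?_⟩
  rw [show p ++ a :: b :: q = (p ++ [a]) ++ b :: q by simp, nodup_middle]
  exact nodup_cons.mpr ⟨by simpa using hb, by simpa using hnd⟩

end List

section Arrangements

open List

variable {α : Type*} [DecidableEq α]

def endpoints (E : Finset (Sym2 α)) : Finset α := E.biUnion Sym2.toFinset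

@[simp] lemma mem_endpoints {E : Finset (Sym2 α)} {x : α} :
    x ∈ endpoints E ↔ ∃ f ∈ E, x ∈ f := by
  simp [endpoints]

lemma endpoints_insert (E : Finset (Sym2 α)) (a b : α) :
    endpoints (insert s(a, b) E) = insert a (insert b (endpoints E)) := by
  simp [endpoints, Sym2.toFinset_mk_eq, Finset.insert_union]

lemma forall_mem_adjPairs_insert_left_iff {E : Finset (Sym2 α)} {p q : List α} {a b : α}
    (hnd : (p ++ b :: a :: q).Nodup) (hE : ∀ f ∈ E, f ∈ (p ++ a :: q).adjPairs) :
    (∀ f ∈ insert s(a, b) E, f ∈ (p ++ b :: a :: q).adjPairs) ↔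
      ∀ c ∈ p.getLast?, s(a, c) ∉ E := by
  rcases p.eq_nil_or_concat with rfl | ⟨p, c, rfl⟩
  · simp only [nil_append, adjPairs_cons_cons, Finset.forall_mem_insert, List.mem_cons] at hE ⊢
    simpa [Sym2.eq_swap] using fun f hf => .inr (hE f hf)
  · rw [concat_eq_append] at hnd hE ⊢
    rw [getLast?_concat]
    constructor
    · rintro h _ ⟨⟩ hac
      have hnb := h _ (Finset.mem_insert_of_mem hac)
      rw [show p ++ [c] ++ b :: a :: q = (p ++ [c, b]) ++ a :: q by simp] at hnd hnb
      rcases mem_getLast?_or_mem_head?_of_mem_adjPairs hnd hnb with hc | hc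
      · simp only [getLast?_append, getLast?_cons_cons, getLast?_singleton, Option.some_or,
          Option.mem_def, Option.some.injEq] at hc
        subst hc
        simp [nodup_middle] at hnd
      · obtain ⟨q, rfl⟩ := head?_eq_some_iff.mp hc
        simp [nodup_middle] at hnd
    · intro hac
      simp only [append_assoc, singleton_append, Option.mem_def, Option.some.injEq,
        forall_eq'] at hE hac ⊢
      rw [adjPairs_append_cons] at hE ⊢
      simp only [adjPairs_cons_cons, mem_append, List.mem_cons, Finset.forall_mem_insert] at hE ⊢
      refine ⟨.inr (.inr (.inl Sym2.eq_swap)), fun f hf => ?_⟩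
      rcases hE f hf with h | h | h
      · exact .inl h
      · rw [h, Sym2.eq_swap] at hf
        exact absurd hf hac
      · exact .inr (.inr (.inr h))

lemma forall_mem_adjPairs_insert_right_iff {E : Finset (Sym2 α)} {p q : List α} {a b : α}
    (hnd : (p ++ a :: b :: q).Nodup) (hE : ∀ f ∈ E, f ∈ (p ++ a :: q).adjPairs) :
    (∀ f ∈ insert s(a, b) E, f ∈ (p ++ a :: b :: q).adjPairs) ↔
      ∀ c ∈ q.head?, s(a, c) ∉ E := by
  have e₁ : (p ++ a :: b :: q).reverse = q.reverse ++ b :: a :: p.reverse := by simp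
  have e₂ : (p ++ a :: q).reverse = q.reverse ++ a :: p.reverse := by simp
  have key := forall_mem_adjPairs_insert_left_iff (E := E) (a := a) (b := b)
    (e₁ ▸ nodup_reverse.mpr hnd)
    (fun f hf => by rw [← e₂, adjPairs_reverse, mem_reverse]; exact hE f hf)
  rw [← e₁, adjPairs_reverse, getLast?_reverse] at key
  simpa only [mem_reverse] using key

noncomputable def arrangements (V : Finset α) (E : Finset (Sym2 α)) : Finset (List α) :=
  V.toList.permutations.toFinset.filter fun l => ∀ f ∈ E, f ∈ l.adjPairs

lemma mem_arrangements {V : Finset α} {E : Finset (Sym2 α)} {l : List α} :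
    l ∈ arrangements V E ↔
      l.Nodup ∧ (∀ x, x ∈ l ↔ x ∈ V) ∧ ∀ f ∈ E, f ∈ l.adjPairs := by
  rw [arrangements, Finset.mem_filter, mem_toFinset, mem_permutations, ← and_assoc]
  refine and_congr_left fun _ => ⟨fun h => ⟨h.nodup_iff.mpr V.nodup_toList, ?_⟩, ?_⟩
  · simpa using fun x => h.mem_iff (a := x)
  · rintro ⟨hl, hV⟩
    exact (perm_ext_iff_of_nodup hl V.nodup_toList).mpr (by simpa using hV)

lemma card_arrangements_empty (V : Finset α) : (arrangements V ∅).card = V.card.factorial := by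
  simp [arrangements, toFinset_card_of_nodup (nodup_permutations _ V.nodup_toList),
    length_permutations]

lemma erase_mem_arrangements {V : Finset α} {E E' : Finset (Sym2 α)} {l : List α} {b : α}
    (hl : l ∈ arrangements V E') (hE : E ⊆ E') (hb : b ∉ endpoints E) :
    l.erase b ∈ arrangements (V.erase b) E := by
  obtain ⟨hnd, hV, hE'⟩ := mem_arrangements.mp hl
  refine mem_arrangements.mpr ⟨hnd.erase b, fun x => ?_, fun f hf => ?_⟩
  · rw [hnd.mem_erase_iff, Finset.mem_erase, hV]
  · exact mem_adjPairs_erase (hE' f (hE hf)) fun hbf => hb (mem_endpoints.mpr ⟨f, hf, hbf⟩)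

lemma filter_arrangements_erase_eq {V : Finset α} {E : Finset (Sym2 α)} {p q : List α} {a b : α}
    (hb : b ∈ V) (hl' : p ++ a :: q ∈ arrangements (V.erase b) E) :
    (arrangements V (insert s(a, b) E)).filter (·.erase b = p ++ a :: q) =
      ({p ++ b :: a :: q, p ++ a :: b :: q} : Finset (List α)).filter
        fun l => ∀ f ∈ insert s(a, b) E, f ∈ l.adjPairs := by
  obtain ⟨hnd, hV, -⟩ := mem_arrangements.mp hl'
  have hbl : b ∉ p ++ a :: q := fun h => by simpa using (hV b).mp h
  have hbp : b ∉ p := fun h => hbl (mem_append_left _ h)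
  obtain ⟨hnd₁, hnd₂⟩ := nodup_insert_beside hnd hbl
  have hmem : ∀ x, (x ∈ p ++ a :: q ∨ x = b) ↔ x ∈ V := fun x => by
    by_cases hx : x = b
    · simp [hx, hb]
    · simpa [hx] using hV x
  ext l
  simp only [Finset.mem_filter, mem_arrangements, Finset.mem_insert, Finset.mem_singleton]
  constructor
  · rintro ⟨⟨hnd, -, hadj⟩, he⟩
    exact ⟨eq_or_eq_of_erase_eq hnd (Sym2.eq_swap ▸ hadj _ (.inl rfl)) he, hadj⟩
  · rintro ⟨rfl | rfl, hadj⟩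
    · refine ⟨⟨hnd₁, fun x => ?_, hadj⟩, ?_⟩
      · rw [← hmem]
        simp only [mem_append, List.mem_cons]
        tauto
      · rw [erase_append_right _ hbp, erase_cons_head]
    · refine ⟨⟨hnd₂, fun x => ?_, hadj⟩, ?_⟩
      · rw [← hmem]
        simp only [mem_append, List.mem_cons]
        tauto
      · have hab : a ≠ b := fun h => hbl (by simp [h])
        rw [erase_append_right _ hbp, erase_cons_tail (by simpa using hab), erase_cons_head]

lemma card_filter_arrangements_erase_eq {V : Finset α} {E : Finset (Sym2 α)} {a b : α}
    (hab : a ≠ b) (ha : a ∈ V) (hb : b ∈ V) (hE : ∀ c d, s(a, c) ∈ E → s(a, d) ∈ E → c = d)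
    {l' : List α} (hl' : l' ∈ arrangements (V.erase b) E) :
    ((arrangements V (insert s(a, b) E)).filter (·.erase b = l')).card =
      if a ∈ endpoints E then 1 else 2 := by
  obtain ⟨hnd, hV, hE'⟩ := mem_arrangements.mp hl'
  obtain ⟨p, q, rfl⟩ := mem_iff_append.mp ((hV a).mpr (Finset.mem_erase.mpr ⟨hab, ha⟩))
  have hbl : b ∉ p ++ a :: q := fun h => by simpa using (hV b).mp h
  obtain ⟨hnd₁, hnd₂⟩ := nodup_insert_beside hnd hbl
  have hpq : ∀ c ∈ p.getLast?, c ∉ q.head? := by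
    intro c hp hq
    obtain ⟨p, rfl⟩ := getLast?_eq_some_iff.mp hp
    obtain ⟨q, rfl⟩ := head?_eq_some_iff.mp hq
    simp [nodup_middle] at hnd
  have hne : p ++ b :: a :: q ≠ p ++ a :: b :: q := by simp [hab.symm]
  rw [filter_arrangements_erase_eq hb hl', Finset.filter_insert, Finset.filter_singleton]
  simp only [forall_mem_adjPairs_insert_left_iff hnd₁ hE',
    forall_mem_adjPairs_insert_right_iff hnd₂ hE']
  by_cases haE : a ∈ endpoints E
  · obtain ⟨f, hf, haf⟩ := mem_endpoints.mp haE
    obtain ⟨z, rfl⟩ := Sym2.mem_iff_exists.mp haf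
    rw [if_pos haE]
    rcases mem_getLast?_or_mem_head?_of_mem_adjPairs hnd (hE' _ hf) with hz | hz
    · have h₁ : ¬ ∀ c ∈ p.getLast?, s(a, c) ∉ E := fun h => h z hz hf
      have h₂ : ∀ c ∈ q.head?, s(a, c) ∉ E := fun c hc hcE =>
        hpq z hz (hE z c hf hcE ▸ hc)
      rw [if_neg h₁, if_pos h₂, Finset.card_singleton]
    · have h₁ : ∀ c ∈ p.getLast?, s(a, c) ∉ E := fun c hc hcE =>
        hpq c hc (hE c z hcE hf ▸ hz)
      have h₂ : ¬ ∀ c ∈ q.head?, s(a, c) ∉ E := fun h => h z hz hf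
      rw [if_pos h₁, if_neg h₂, insert_empty_eq, Finset.card_singleton]
  · have hnE : ∀ c, s(a, c) ∉ E := fun c hc =>
      haE (mem_endpoints.mpr ⟨_, hc, Sym2.mem_mk_left a c⟩)
    simp [haE, hnE, hne]

lemma card_arrangements_insert {V : Finset α} {E : Finset (Sym2 α)} {a b : α} (hab : a ≠ b)
    (ha : a ∈ V) (hb : b ∈ V) (hbE : b ∉ endpoints E)
    (hE : ∀ c d, s(a, c) ∈ E → s(a, d) ∈ E → c = d) :
    (arrangements V (insert s(a, b) E)).card =
      (arrangements (V.erase b) E).card * if a ∈ endpoints E then 1 else 2 := by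
  rw [Finset.card_eq_sum_card_fiberwise (f := fun l => l.erase b)
      (t := arrangements (V.erase b) E)
      fun l hl => erase_mem_arrangements hl (Finset.subset_insert _ _) hbE,
    Finset.sum_congr rfl fun l' hl' => card_filter_arrangements_erase_eq hab ha hb hE hl',
    Finset.sum_const, smul_eq_mul]

-- Multiplied out by `2 ^ E.card` to avoid a truncated subtraction in the exponent.
theorem card_arrangements_mul_two_pow {L : List α} (hL : L.Nodup) {E : Finset (Sym2 α)}
    (hE : ∀ f ∈ E, f ∈ L.adjPairs) {V : Finset α} (hV : endpoints E ⊆ V) :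
    (arrangements V E).card * 2 ^ E.card =
      2 ^ (endpoints E).card * (V.card - E.card).factorial := by
  induction L generalizing E V with
  | nil =>
    obtain rfl : E = ∅ := Finset.eq_empty_of_forall_notMem fun f hf => by simpa using hE f hf
    simp [card_arrangements_empty, endpoints]
  | cons b L ih =>
    by_cases hEL : ∀ f ∈ E, f ∈ L.adjPairs
    · exact ih hL.of_cons hEL hV
    obtain ⟨f, hf, hfL⟩ := not_forall₂.mp hEL
    obtain ⟨a, L, rfl⟩ : ∃ a L', L = a :: L' := by
      cases L with
      | nil => simpa using hE f hf
      | cons a L => exact ⟨a, L, rfl⟩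
    obtain rfl : f = s(a, b) := by
      simpa [hfL, Sym2.eq_swap] using hE f hf
    obtain ⟨E, habE, rfl⟩ : ∃ E', s(a, b) ∉ E' ∧ E = insert s(a, b) E' :=
      ⟨_, Finset.notMem_erase _ _, (Finset.insert_erase hf).symm⟩
    have hE' : ∀ f ∈ E, f ∈ (a :: L).adjPairs := fun f hf' => by
      have := hE f (Finset.mem_insert_of_mem hf')
      rw [adjPairs_cons_cons, List.mem_cons, Sym2.eq_swap] at this
      exact this.resolve_left (ne_of_mem_of_not_mem hf' habE)
    have hbE : b ∉ endpoints E := fun hb => by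
      obtain ⟨f, hf', hbf⟩ := mem_endpoints.mp hb
      exact (nodup_cons.mp hL).1 (mem_of_mem_adjPairs (hE' f hf') hbf)
    have huniq : ∀ c d, s(a, c) ∈ E → s(a, d) ∈ E → c = d := fun c d hc hd =>
      Option.mem_unique (mem_head?_of_mem_adjPairs_cons hL.of_cons (hE' _ hc))
        (mem_head?_of_mem_adjPairs_cons hL.of_cons (hE' _ hd))
    have hab : a ≠ b := fun h => by simp [h] at hL
    have ha : a ∈ V := hV (mem_endpoints.mpr ⟨_, hf, Sym2.mem_mk_left a b⟩)
    have hb : b ∈ V := hV (mem_endpoints.mpr ⟨_, hf, Sym2.mem_mk_right a b⟩)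
    have hV' : endpoints E ⊆ V.erase b := fun x hx =>
      Finset.mem_erase.mpr ⟨fun h => hbE (h ▸ hx), hV (by simp [endpoints_insert, hx])⟩
    have IH := ih hL.of_cons hE' hV'
    rw [card_arrangements_insert hab ha hb hbE huniq, endpoints_insert,
      Finset.card_insert_of_notMem habE, Nat.sub_add_eq]
    rw [Finset.card_erase_of_mem hb, Nat.sub_right_comm] at IH
    split_ifs with haE
    · rw [Finset.card_insert_of_mem (Finset.mem_insert_of_mem haE),
        Finset.card_insert_of_notMem hbE, pow_succ, pow_succ]
      linear_combination 2 * IH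
    · rw [Finset.card_insert_of_notMem (by simp [hab, haE]), Finset.card_insert_of_notMem hbE,
        pow_succ, pow_succ, pow_succ]
      linear_combination 4 * IH

end Arrangements

lemma bpAdj_eq_toFinset_adjPairs {n : ℕ} (x : Equiv.Perm (Fin n)) :
    bpAdj x = (List.ofFn x).adjPairs.toFinset := by
  ext f
  simp [bpAdj, List.adjPairs_ofFn, List.mem_ofFn]

lemma card_filter_subset_bpAdj {n : ℕ} (I : Finset (Sym2 (Fin n))) :
    (univ.filter fun x : Equiv.Perm (Fin n) => I ⊆ bpAdj x).card =
      (arrangements univ I).card := by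
  simp only [bpAdj_eq_toFinset_adjPairs, subset_iff, List.mem_toFinset]
  refine card_bij (fun x _ => List.ofFn x) (fun x hx => ?_) (fun x _ y _ h => ?_) fun l hl => ?_
  · refine mem_arrangements.mpr
      ⟨List.nodup_ofFn.mpr x.injective, fun y => ?_, (mem_filter.mp hx).2⟩
    simpa [List.mem_ofFn] using x.surjective y
  · exact Equiv.ext (congrFun (List.ofFn_injective h))
  · obtain ⟨hnd, hmem, hI⟩ := mem_arrangements.mp hl
    have hlen : l.length = n := by
      rw [← List.toFinset_card_of_nodup hnd, eq_univ_of_forall fun x => List.mem_toFinset.mpr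
        ((hmem x).mpr (mem_univ x)), card_univ, Fintype.card_fin]
    set x := (finCongr hlen.symm).trans (hnd.getEquivOfForallMemList l (by simpa using hmem))
    have hx : List.ofFn x = l := List.ext_getElem (by simp [hlen]) fun i _ _ => by simp [x]
    exact ⟨x, mem_filter.mpr ⟨mem_univ x, hx ▸ hI⟩, hx⟩

section Segments

variable {n : ℕ} (π : Equiv.Perm (Fin n))

def adjAt (i : Fin (n - 1)) : Sym2 (Fin n) := s(π ⟨i, by omega⟩, π ⟨i + 1, by omega⟩)

def rightEnds (I : Finset (Sym2 (Fin n))) : Finset (Fin n) :=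
  (univ.filter fun i => adjAt π i ∈ I).image fun i : Fin (n - 1) => π ⟨i + 1, by omega⟩

variable {π} {I : Finset (Sym2 (Fin n))}

lemma exists_adjAt_eq (hI : I ⊆ bpAdj π) {f : Sym2 (Fin n)} (hf : f ∈ I) :
    ∃ i, adjAt π i = f := by
  obtain ⟨i, -, hi⟩ := mem_image.mp (hI hf)
  exact ⟨i, hi⟩

lemma card_rightEnds (hI : I ⊆ bpAdj π) : (rightEnds π I).card = I.card := by
  have hinj : Function.Injective (adjAt π) := fun i j h => by
    simp only [adjAt, Sym2.eq_iff, EmbeddingLike.apply_eq_iff_eq, Fin.mk.injEq] at h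
    omega
  rw [rightEnds, card_image_of_injective _ fun i j h => by simpa [Fin.ext_iff] using h,
    ← card_image_of_injective _ hinj]
  congr 1
  ext f
  simp only [mem_image, mem_filter, mem_univ, true_and]
  constructor
  · rintro ⟨i, hi, rfl⟩
    exact hi
  · intro hf
    obtain ⟨i, rfl⟩ := exists_adjAt_eq hI hf
    exact ⟨i, hf, rfl⟩

lemma rightEnds_subset_endpoints : rightEnds π I ⊆ endpoints I := by
  intro v hv
  obtain ⟨i, hi, rfl⟩ := mem_image.mp hv
  exact mem_endpoints.mpr ⟨_, (mem_filter.mp hi).2, Sym2.mem_mk_right _ _⟩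

lemma pos_le_of_adj (hI : I ⊆ bpAdj π) {u v w : Fin n} (hv : v ∉ rightEnds π I)
    (hadj : (SimpleGraph.fromEdgeSet (I : Set (Sym2 (Fin n)))).Adj u w)
    (hu : (π.symm v : ℕ) ≤ π.symm u) : (π.symm v : ℕ) ≤ π.symm w := by
  rw [SimpleGraph.fromEdgeSet_adj] at hadj
  obtain ⟨i, hi⟩ := exists_adjAt_eq hI hadj.1
  have hiI : adjAt π i ∈ I := hi ▸ hadj.1
  rcases Sym2.eq_iff.mp hi with ⟨rfl, rfl⟩ | ⟨rfl, rfl⟩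
  · simp only [Equiv.symm_apply_apply, Fin.val_mk] at hu ⊢
    omega
  · simp only [Equiv.symm_apply_apply, Fin.val_mk] at hu ⊢
    by_contra h
    have hvi : π.symm v = ⟨i + 1, by omega⟩ := Fin.ext (by dsimp only; omega)
    exact hv (mem_image.mpr ⟨i, mem_filter.mpr ⟨mem_univ _, hiI⟩, by simp [← hvi]⟩)

lemma pos_le_of_reachable (hI : I ⊆ bpAdj π) {v w : Fin n} (hv : v ∉ rightEnds π I)
    (h : (SimpleGraph.fromEdgeSet (I : Set (Sym2 (Fin n)))).Reachable v w) :
    (π.symm v : ℕ) ≤ π.symm w := by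
  obtain ⟨q⟩ := h
  suffices ∀ u (q : (SimpleGraph.fromEdgeSet (I : Set (Sym2 (Fin n)))).Walk u w),
      (π.symm v : ℕ) ≤ π.symm u → (π.symm v : ℕ) ≤ π.symm w from this v q le_rfl
  intro u q'
  clear q
  induction q' with
  | nil => exact id
  | cons hadj _ ih => exact fun hu => ih (pos_le_of_adj hI hv hadj hu)

lemma exists_reachable_mem_sdiff_rightEnds {v : Fin n}
    (hv : v ∈ endpoints I) : ∃ u ∈ endpoints I \ rightEnds π I,
      (SimpleGraph.fromEdgeSet (I : Set (Sym2 (Fin n)))).Reachable u v := by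
  obtain ⟨u, hu, hmin⟩ := exists_min_image
    ((endpoints I).filter ((SimpleGraph.fromEdgeSet (I : Set (Sym2 (Fin n)))).Reachable · v))
    (fun u => (π.symm u : ℕ)) ⟨v, mem_filter.mpr ⟨hv, .refl v⟩⟩
  rw [mem_filter] at hu
  refine ⟨u, mem_sdiff.mpr ⟨hu.1, fun hR => ?_⟩, hu.2⟩
  obtain ⟨i, hi, rfl⟩ := mem_image.mp hR
  have hiI : adjAt π i ∈ I := (mem_filter.mp hi).2
  have hadj : (SimpleGraph.fromEdgeSet (I : Set (Sym2 (Fin n)))).Adj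
      (π ⟨i, by omega⟩) (π ⟨i + 1, by omega⟩) :=
    SimpleGraph.fromEdgeSet_adj _ |>.mpr ⟨hiI, by simp⟩
  have := hmin _ (mem_filter.mpr ⟨mem_endpoints.mpr ⟨_, hiI, Sym2.mem_mk_left _ _⟩,
    hadj.reachable.trans hu.2⟩)
  simp at this

lemma numSegments_eq_card_sdiff_rightEnds (hI : I ⊆ bpAdj π) :
    numSegments I = (endpoints I \ rightEnds π I).card := by
  rw [numSegments, ← Nat.card_eq_finsetCard]
  symm
  refine Nat.card_eq_of_bijective (fun v => ⟨SimpleGraph.connectedComponentMk _ v, v,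
    mem_endpoints.mp (mem_sdiff.mp v.2).1, rfl⟩) ⟨fun v w h => ?_, ?_⟩
  · have hvw := SimpleGraph.ConnectedComponent.exact (congrArg Subtype.val h)
    exact Subtype.ext (π.symm.injective (Fin.ext (le_antisymm
      (pos_le_of_reachable hI (mem_sdiff.mp v.2).2 hvw)
      (pos_le_of_reachable hI (mem_sdiff.mp w.2).2 hvw.symm))))
  · rintro ⟨c, v, hv, rfl⟩
    obtain ⟨u, hu, huv⟩ := exists_reachable_mem_sdiff_rightEnds (mem_endpoints.mpr hv)
    exact ⟨⟨u, hu⟩, Subtype.ext (SimpleGraph.ConnectedComponent.sound huv)⟩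

theorem numSegments_add_card (hI : I ⊆ bpAdj π) :
    numSegments I + I.card = (endpoints I).card := by
  rw [numSegments_eq_card_sdiff_rightEnds hI, ← card_rightEnds hI,
    card_sdiff_add_card_eq_card rightEnds_subset_endpoints]

end Segments

/-- A segment set with m adjacencies and k segments is contained in exactly
2^k · (n-m)! permutations. -/
theorem card_permutations_containing_segment_set (n : ℕ) (I : Finset (Sym2 (Fin n)))
    (π : Equiv.Perm (Fin n)) (hI : I ⊆ bpAdj π) (m k : ℕ)
    (hm : I.card = m) (hk : numSegments I = k) :
    (Finset.univ.filter (fun x : Equiv.Perm (Fin n) => I ⊆ bpAdj x)).card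
      = 2 ^ k * (n - m).factorial := by
  subst hm hk
  have hIπ : ∀ f ∈ I, f ∈ (List.ofFn π).adjPairs := fun f hf => by
    simpa [bpAdj_eq_toFinset_adjPairs] using hI hf
  have hcount := card_arrangements_mul_two_pow (List.nodup_ofFn.mpr π.injective) hIπ
    (subset_univ (endpoints I))
  rw [← numSegments_add_card hI, pow_add, card_univ, Fintype.card_fin] at hcount
  rw [card_filter_subset_bpAdj]
  exact Nat.eq_of_mul_eq_mul_right (pow_pos two_pos I.card) (by rw [hcount]; ring)
end

section
/- Let X = {x_1,...,x_k} ⊆ S_n with labels chosen so that d_T(x_k, X) = min_i d_T(x_i, X), and for U ⊆ X define B_U = A_U \ (⋃_{U ⊊ V ⊆ X} B_V) recursively (where A_U is the set of adjacencies common to all permutations in U). Then for any breakpoint median π of X, |A_π \ ⋃_{i=1}^k A_{x_i}| ≤ Σ_{r=2}^{k-1} (r-1) Σ_{1 ≤ i_1 < ... < i_r < k} |B_{{x_{i_1},...,x_{i_r}}}|. -/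
open Finset

/-- B_U for U ⊆ X, defined top-down: B_U = A_U \ ⋃_{U ⊊ V ⊆ X} B_V,
where A_U = ⋂_{x ∈ U} A_x. -/
def Bset {n : ℕ} (X U : Finset (Equiv.Perm (Fin n))) : Finset (Sym2 (Fin n)) :=
  (U.inf bpAdj) \
    ((X.powerset.filter (fun V => U ⊂ V)).attach.biUnion fun V => Bset X V.1)
termination_by X.card - U.card
decreasing_by
  have hV := V.2
  simp only [Finset.mem_filter, Finset.mem_powerset] at hV
  have h1 := Finset.card_lt_card hV.2
  have h2 := Finset.card_le_card hV.1
  omega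

lemma bpAdj_card {n : ℕ} (z : Equiv.Perm (Fin n)) : (bpAdj z).card = n - 1 := by
  rw [bpAdj, Finset.card_image_of_injective _ ?_, Finset.card_univ, Fintype.card_fin]
  intro i j hij
  simp only [Sym2.eq, Sym2.rel_iff', Prod.mk.injEq, Prod.swap_prod_mk] at hij
  rcases hij with ⟨h1, h2⟩ | ⟨h1, h2⟩
  · have := z.injective h1
    exact Fin.ext (by simpa using congrArg Fin.val this)
  · have e1 := z.injective h1; have e2 := z.injective h2
    have v1 : (i : ℕ) = (j : ℕ) + 1 := by simpa using congrArg Fin.val e1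
    have v2 : (i : ℕ) + 1 = (j : ℕ) := by simpa using congrArg Fin.val e2
    omega

lemma Bset_eq {n : ℕ} (X : Finset (Equiv.Perm (Fin n))) :
    ∀ m (U : Finset (Equiv.Perm (Fin n))), U ⊆ X → X.card - U.card = m →
      Bset X U = Finset.univ.filter (fun a => X.filter (fun y => a ∈ bpAdj y) = U) := by
  intro m
  induction m using Nat.strong_induction_on with
  | _ m ih =>
    intro U hUX hm
    rw [Bset]
    ext a
    simp only [Finset.mem_sdiff, Finset.mem_biUnion, Finset.mem_attach, true_and,
      Subtype.exists, Finset.mem_filter, Finset.mem_powerset, Finset.mem_univ,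
      Finset.mem_inf, not_exists]
    constructor
    · rintro ⟨hinf, hnot⟩
      by_contra hne
      have hsub : U ⊆ X.filter (fun y => a ∈ bpAdj y) := fun y hy =>
        Finset.mem_filter.2 ⟨hUX hy, hinf y hy⟩
      have hss : U ⊂ X.filter (fun y => a ∈ bpAdj y) :=
        lt_of_le_of_ne hsub (fun h => hne h.symm)
      have hVX : X.filter (fun y => a ∈ bpAdj y) ⊆ X := Finset.filter_subset _ _
      refine hnot (X.filter (fun y => a ∈ bpAdj y)) ⟨hVX, hss⟩ ?_
      have hlt : X.card - (X.filter (fun y => a ∈ bpAdj y)).card < m := by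
        have h1 := Finset.card_lt_card hss
        have h2 := Finset.card_le_card hVX
        have h3 := Finset.card_le_card hUX
        omega
      rw [ih _ hlt _ hVX rfl]
      exact Finset.mem_filter.2 ⟨Finset.mem_univ _, rfl⟩
    · intro h
      constructor
      · intro y hy
        have : y ∈ X.filter (fun y => a ∈ bpAdj y) := h ▸ hy
        exact (Finset.mem_filter.1 this).2
      · rintro V ⟨hVX, hUV⟩ hmem
        have hlt : X.card - V.card < m := by
          have h1 := Finset.card_lt_card hUV
          have h2 := Finset.card_le_card hVX
          have h3 := Finset.card_le_card hUX
          omega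
        rw [ih _ hlt _ hVX rfl] at hmem
        have : X.filter (fun y => a ∈ bpAdj y) = V := (Finset.mem_filter.1 hmem).2
        exact absurd (h.symm.trans this) (ne_of_lt hUV)


/-- For X = {x_1,...,x_k} with x_k of minimal total distance, any breakpoint median π
of X satisfies |A_π \ ⋃ A_{x_i}| ≤ Σ_{r=2}^{k-1} (r-1) Σ_{i_1<...<i_r<k} |B_{x_{i_1},...,x_{i_r}}|. -/
theorem median_extra_adjacencies (n k : ℕ) (hk : 0 < k)
    (x : Fin k → Equiv.Perm (Fin n)) (hinj : Function.Injective x)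
    (π : Equiv.Perm (Fin n))
    (hmin : ∀ i : Fin k,
      bpTotal (x ⟨k - 1, by omega⟩) (Finset.image x Finset.univ)
        ≤ bpTotal (x i) (Finset.image x Finset.univ))
    (hmed : IsBpMedian π (Finset.image x Finset.univ)) :
    (bpAdj π \ Finset.univ.biUnion fun i => bpAdj (x i)).card
      ≤ ∑ S ∈ ((Finset.univ : Finset (Fin k)).erase ⟨k - 1, by omega⟩).powerset.filter
            (fun S => 2 ≤ S.card),
          (S.card - 1) * (Bset (Finset.image x Finset.univ) (Finset.image x S)).card := by
  classical
  set X := Finset.image x Finset.univ with hX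
  set kl : Fin k := ⟨k - 1, by omega⟩ with hkl
  set supp : Sym2 (Fin n) → Finset (Fin k) :=
    fun a => Finset.univ.filter (fun i => a ∈ bpAdj (x i)) with hsupp
  have hsuppX : ∀ a, X.filter (fun y => a ∈ bpAdj y) = Finset.image x (supp a) := by
    intro a
    ext y
    constructor
    · intro hy
      obtain ⟨hyX, hay⟩ := Finset.mem_filter.1 hy
      rw [hX] at hyX
      obtain ⟨i, -, rfl⟩ := Finset.mem_image.1 hyX
      refine Finset.mem_image.2 ⟨i, ?_, rfl⟩
      simp only [hsupp, Finset.mem_filter, Finset.mem_univ, true_and]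
      exact hay
    · intro hy
      obtain ⟨i, hi, rfl⟩ := Finset.mem_image.1 hy
      simp only [hsupp, Finset.mem_filter, Finset.mem_univ, true_and] at hi
      refine Finset.mem_filter.2 ⟨?_, hi⟩
      rw [hX]
      exact Finset.mem_image.2 ⟨i, Finset.mem_univ _, rfl⟩
  have hinter : ∀ (z : Equiv.Perm (Fin n)) (i : Fin k),
      (bpAdj z ∩ bpAdj (x i)).card ≤ n - 1 := fun z i =>
    le_trans (Finset.card_le_card Finset.inter_subset_left) (le_of_eq (bpAdj_card z))
  have htotal : ∀ z : Equiv.Perm (Fin n),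
      bpTotal z X = ∑ i : Fin k, bpDist z (x i) := by
    intro z
    rw [hX, bpTotal]
    exact Finset.sum_image (fun i _ j _ h => hinj h)
  have hsum_add : ∀ z : Equiv.Perm (Fin n),
      bpTotal z X + ∑ i : Fin k, (bpAdj z ∩ bpAdj (x i)).card = k * (n - 1) := by
    intro z
    rw [htotal, ← Finset.sum_add_distrib]
    simp only [bpDist]
    rw [Finset.sum_congr rfl (fun i _ => Nat.sub_add_cancel (hinter z i))]
    rw [Finset.sum_const, Finset.card_univ, Fintype.card_fin, smul_eq_mul]
  -- score comparison
  have hScore : (∑ i : Fin k, (bpAdj (x kl) ∩ bpAdj (x i)).card)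
      ≤ ∑ i : Fin k, (bpAdj π ∩ bpAdj (x i)).card := by
    have h1 : bpTotal π X ≤ bpTotal (x kl) X := hmed (x kl)
    have h2 := hsum_add π
    have h3 := hsum_add (x kl)
    omega
  have hScore_eq : ∀ z : Equiv.Perm (Fin n), (∑ i : Fin k, (bpAdj z ∩ bpAdj (x i)).card)
      = ∑ a ∈ bpAdj z, (supp a).card := by
    intro z
    calc (∑ i : Fin k, (bpAdj z ∩ bpAdj (x i)).card)
        = ∑ i : Fin k, ∑ a ∈ bpAdj z, if a ∈ bpAdj (x i) then 1 else 0 := by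
          refine Finset.sum_congr rfl fun i _ => ?_
          rw [← Finset.filter_mem_eq_inter, Finset.card_filter]
      _ = ∑ a ∈ bpAdj z, ∑ i : Fin k, if a ∈ bpAdj (x i) then 1 else 0 := Finset.sum_comm
      _ = ∑ a ∈ bpAdj z, (supp a).card := by
          refine Finset.sum_congr rfl fun a _ => ?_
          simp only [hsupp, Finset.card_filter]
  set T := bpAdj π \ Finset.univ.biUnion (fun i => bpAdj (x i)) with hT
  have hTeq : T = (bpAdj π).filter (fun a => supp a = ∅) := by
    ext a
    simp only [hT, hsupp, Finset.mem_sdiff, Finset.mem_biUnion, Finset.mem_univ, true_and,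
      Finset.mem_filter, not_exists, Finset.filter_eq_empty_iff]
    tauto
  set P := (bpAdj π).filter (fun a => ¬ supp a = ∅) with hP
  have hTPcard : T.card + P.card = n - 1 := by
    rw [hTeq, hP, Finset.card_filter_add_card_filter_not, bpAdj_card]
  have hScoreP : (∑ a ∈ bpAdj π, (supp a).card) = ∑ a ∈ P, (supp a).card := by
    rw [hP]
    exact (Finset.sum_filter_of_ne (fun a _ h =>
      Finset.nonempty_iff_ne_empty.1 (Finset.card_ne_zero.1 h))).symm
  have hP1 : ∑ a ∈ P, (supp a).card = P.card + ∑ a ∈ P, ((supp a).card - 1) := by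
    rw [Finset.card_eq_sum_ones, ← Finset.sum_add_distrib]
    refine Finset.sum_congr rfl fun a ha => ?_
    have h1 : supp a ≠ ∅ := (Finset.mem_filter.1 ha).2
    have h2 : 1 ≤ (supp a).card := Finset.card_pos.2 (Finset.nonempty_iff_ne_empty.2 h1)
    omega
  -- split the excess
  have hsplit : ∑ a ∈ P, ((supp a).card - 1)
      ≤ (∑ a ∈ bpAdj (x kl), ((supp a).card - 1))
        + ∑ a ∈ Finset.univ.filter (fun a => kl ∉ supp a), ((supp a).card - 1) := by
    rw [← Finset.sum_filter_add_sum_filter_not P (fun a => kl ∈ supp a)]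
    refine Nat.add_le_add ?_ ?_
    · refine Finset.sum_le_sum_of_subset ?_
      intro a ha
      have h2 := (Finset.mem_filter.1 ha).2
      simp only [hsupp, Finset.mem_filter, Finset.mem_univ, true_and] at h2
      exact h2
    · refine Finset.sum_le_sum_of_subset ?_
      intro a ha
      exact Finset.mem_filter.2 ⟨Finset.mem_univ _, (Finset.mem_filter.1 ha).2⟩
  have hK : ∑ a ∈ bpAdj (x kl), (supp a).card
      = (n - 1) + ∑ a ∈ bpAdj (x kl), ((supp a).card - 1) := by
    rw [← bpAdj_card (x kl), Finset.card_eq_sum_ones, ← Finset.sum_add_distrib]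
    refine Finset.sum_congr rfl fun a ha => ?_
    have h1 : kl ∈ supp a := by
      simp only [hsupp, Finset.mem_filter, Finset.mem_univ, true_and]; exact ha
    have h2 : 1 ≤ (supp a).card := Finset.card_pos.2 ⟨kl, h1⟩
    omega
  have hTle : T.card ≤ ∑ a ∈ Finset.univ.filter (fun a => kl ∉ supp a),
      ((supp a).card - 1) := by
    have e1 := hScore_eq π
    have e2 := hScore_eq (x kl)
    rw [e1, e2, hScoreP, hP1, hK] at hScore
    omega
  -- now rewrite the RHS
  refine le_trans hTle (le_of_eq ?_)
  have hmaps : ∀ a ∈ Finset.univ.filter (fun a => kl ∉ supp a),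
      supp a ∈ (Finset.univ.erase kl).powerset := by
    intro a ha
    simp only [Finset.mem_powerset]
    intro i hi
    refine Finset.mem_erase.2 ⟨fun h => ?_, Finset.mem_univ i⟩
    exact (Finset.mem_filter.1 ha).2 (h ▸ hi)
  rw [← Finset.sum_fiberwise_of_maps_to hmaps (fun a => (supp a).card - 1)]
  rw [← Finset.sum_filter_of_ne (s := (Finset.univ.erase kl).powerset)
    (p := fun S => 2 ≤ S.card) (f := fun S =>
      ∑ a ∈ (Finset.univ.filter (fun a => kl ∉ supp a)).filter (fun a => supp a = S),
        ((supp a).card - 1)) ?hne]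
  case hne =>
    intro S _ hS0
    obtain ⟨a, ha, hne⟩ := Finset.exists_ne_zero_of_sum_ne_zero hS0
    have hSa : supp a = S := (Finset.mem_filter.1 ha).2
    have hc : (supp a).card = S.card := by rw [hSa]
    have h1 : 1 ≤ (supp a).card - 1 := Nat.one_le_iff_ne_zero.2 hne
    omega
  refine Finset.sum_congr rfl fun S hS => ?_
  have hS' := Finset.mem_powerset.1 (Finset.mem_filter.1 hS).1
  have hff : (Finset.univ.filter (fun a => kl ∉ supp a)).filter (fun a => supp a = S)
      = Finset.univ.filter (fun a => supp a = S) := by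
    ext a
    simp only [Finset.mem_filter, Finset.mem_univ, true_and]
    constructor
    · tauto
    · intro h
      exact ⟨fun hkl => (Finset.mem_erase.1 (hS' (h ▸ hkl))).1 rfl, h⟩
  rw [hff]
  have hsum : ∑ a ∈ Finset.univ.filter (fun a => supp a = S), ((supp a).card - 1)
      = (S.card - 1) * (Finset.univ.filter (fun a => supp a = S)).card := by
    rw [Finset.sum_congr rfl (fun a ha => by
      rw [(Finset.mem_filter.1 ha).2]), Finset.sum_const, smul_eq_mul, mul_comm]
  rw [hsum]
  congr 1
  rw [Bset_eq X (X.card - (Finset.image x S).card) (Finset.image x S)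
    (by rw [hX]; exact Finset.image_subset_image (Finset.subset_univ S)) rfl]
  congr 1
  ext a
  simp only [Finset.mem_filter, Finset.mem_univ, true_and]
  rw [hsuppX a]
  exact ⟨fun h => by rw [h], fun h => Finset.image_injective hinj h⟩
end
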